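/- arXiv:2105.15086 — 5 statements merged into one kernel-verified Lean document; each statement's English description precedes it below -/
import Mathlib

section
/- Let E ⊆ F be a field extension and let n = n_1 + ⋯ + n_ℓ be a partition of a positive integer n. Let f : F^n → F^n be an additive bijection which is semilinear, i.e., there is a field automorphism τ of F with τ(E) = E such that f(λ v) = τ(λ) f(v) for all λ ∈ F and v ∈ F^n. Then f is an isometry for the sum-rank distance d_SR (i.e., d_SR(f(u), f(v)) = d_SR(u, v) for all u, v ∈ F^n) if and only if there exist nonzero scalars a_1, …, a_ℓ ∈ F*, invertible matrices M_i ∈ GL(n_i, E) for i = 1, …, ℓ, and a permutation π of {1, …, ℓ} satisfying n_{π(i)} = n_i for all i, such that f((c^(1) | … | c^(ℓ))) = (τ(a_1 c^(π^{-1}(1))) M_1 | … | τ(a_ℓ c^(π^{-1}(ℓ))) M_ℓ) for every c ∈ F^n, where τ is applied entrywise. -/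
/-- The rank weight of a vector over `F` with respect to the extension `F/E`. -/
noncomputable def rankWt (E : Type*) {F : Type*} [Field E] [Field F] [Algebra E F]
    {N : ℕ} (v : Fin N → F) : ℕ :=
  Module.finrank E (Submodule.span E (Set.range v) : Submodule E F)

/-- The sum-rank weight of `c ∈ F^n` with respect to the partition
`n = n 0 + ⋯ + n (ℓ-1)` and the extension `F/E`. -/
noncomputable def srWtP (E : Type*) {F : Type*} [Field E] [Field F] [Algebra E F]
    {ℓ : ℕ} {n : Fin ℓ → ℕ} (c : (i : Fin ℓ) → Fin (n i) → F) : ℕ :=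
  ∑ i, rankWt E (c i)

/-!
A weight-preserving map sends the vectors of sum-rank weight one (one nonzero block, of `E`-rank
one) to such vectors. Since `eᵢⱼ + eᵢ₀` again has weight one, all basis vectors of block `i` land
in one block `π i`, so `f` permutes the blocks. The component `G` of `f` from block `π⁻¹ b` to
block `b` maps each basis vector `eₖ` to a vector of `E`-rank one, whose entries lie on an
`E`-line `E λₖ`. If `E λₖ ≠ E λ₀`, the weight-one vector `G (eₖ + e₀)` forces `G eₖ` and `G e₀` to
be `F`-proportional, contradicting injectivity; so all entries lie on `E λ₀`, which gives
`G w = τ (α w) B` with `B` over `E`, invertible since `G` is bijective. Conversely `τ`, nonzero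
scalars and invertible matrices over `E` preserve the dimension of the `E`-span of the entries.
-/

open Submodule Module
open scoped Matrix

section RankWeight

variable {E F : Type*} [Field E] [Field F] [Algebra E F] {N : ℕ}

instance (v : Fin N → F) : FiniteDimensional E (span E (Set.range v)) :=
  FiniteDimensional.span_of_finite E (Set.finite_range v)

lemma rankWt_eq_zero_iff {v : Fin N → F} : rankWt E v = 0 ↔ v = 0 := by
  rw [rankWt, Submodule.finrank_eq_zero, span_eq_bot, Set.forall_mem_range, funext_iff]
  rfl

lemma rankWt_ne_zero_iff {v : Fin N → F} : rankWt E v ≠ 0 ↔ v ≠ 0 :=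
  rankWt_eq_zero_iff.not

lemma rankWt_le_of_forall_mem_span {N' : ℕ} {v : Fin N → F} {u : Fin N' → F}
    (h : ∀ m, v m ∈ span E (Set.range u)) : rankWt E v ≤ rankWt E u :=
  Submodule.finrank_mono (span_le.mpr (Set.forall_mem_range.mpr h))

lemma rankWt_le_card (v : Fin N → F) : rankWt E v ≤ N := by
  unfold rankWt
  simpa [Set.finrank] using finrank_range_le_card (R := E) v

lemma exists_span_eq_of_rankWt (v : Fin N → F) :
    ∃ u : Fin (rankWt E v) → F, span E (Set.range u) = span E (Set.range v) := by
  let b := Module.finBasis E (span E (Set.range v))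
  refine ⟨fun k => b k, ?_⟩
  calc span E (Set.range fun k => (b k : F))
      = map (span E (Set.range v)).subtype (span E (Set.range b)) := by
        rw [map_span, ← Set.range_comp]; rfl
    _ = span E (Set.range v) := by rw [b.span_eq, Submodule.map_top, range_subtype]

lemma mem_span_singleton_of_rankWt_le_one {v : Fin N → F} (h : rankWt E v ≤ 1) {m₀ : Fin N}
    (hm₀ : v m₀ ≠ 0) (m : Fin N) : v m ∈ E ∙ v m₀ := by
  have hle : E ∙ v m₀ ≤ span E (Set.range v) := span_mono (by simp)
  rw [eq_of_le_of_finrank_le hle (h.trans (finrank_span_singleton hm₀).ge)]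
  exact subset_span ⟨m, rfl⟩

lemma rankWt_le_one_iff {v : Fin N → F} :
    rankWt E v ≤ 1 ↔ ∃ x : F, ∀ m, v m ∈ E ∙ x := by
  constructor
  · intro h
    by_cases hv : v = 0
    · exact ⟨0, fun m => by simp [hv]⟩
    obtain ⟨m₀, hm₀⟩ := Function.ne_iff.mp hv
    exact ⟨v m₀, mem_span_singleton_of_rankWt_le_one h hm₀⟩
  · rintro ⟨x, hx⟩
    exact (rankWt_le_of_forall_mem_span (u := ![x]) (by simpa using hx)).trans
      (rankWt_le_card _)

lemma rankWt_comp_le (φ : F →+ F) (hφ : ∀ (e : E) (x : F), ∃ e' : E, φ (e • x) = e' • φ x)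
    (v : Fin N → F) : rankWt E (φ ∘ v) ≤ rankWt E v := by
  obtain ⟨u, hu⟩ := exists_span_eq_of_rankWt (E := E) v
  have hmap : ∀ x ∈ span E (Set.range u), φ x ∈ span E (Set.range (φ ∘ u)) := by
    intro x hx
    induction hx using span_induction with
    | mem y hy =>
      obtain ⟨k, rfl⟩ := hy
      exact subset_span ⟨k, rfl⟩
    | zero => simp
    | add x y _ _ hx hy => rw [map_add]; exact add_mem hx hy
    | smul e y _ hy =>
      obtain ⟨e', he'⟩ := hφ e y
      rw [he']
      exact smul_mem _ _ hy
  calc rankWt E (φ ∘ v) ≤ rankWt E (φ ∘ u) :=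
        rankWt_le_of_forall_mem_span fun m => hmap _ (hu ▸ subset_span ⟨m, rfl⟩)
    _ ≤ rankWt E v := rankWt_le_card _

lemma rankWt_ringEquiv_mul (τ : F ≃+* F)
    (hτ : τ '' Set.range (algebraMap E F) = Set.range (algebraMap E F)) {a : F} (ha : a ≠ 0)
    (v : Fin N → F) : rankWt E (fun m => τ (a * v m)) = rankWt E v := by
  have hτE : ∀ e : E, ∃ e' : E, τ (algebraMap E F e) = algebraMap E F e' := fun e => by
    obtain ⟨e', he'⟩ := hτ.le ⟨_, ⟨e, rfl⟩, rfl⟩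
    exact ⟨e', he'.symm⟩
  have hτE' : ∀ e : E, ∃ e' : E, τ.symm (algebraMap E F e) = algebraMap E F e' := fun e => by
    obtain ⟨_, ⟨e', rfl⟩, he'⟩ := hτ.ge ⟨e, rfl⟩
    exact ⟨e', by rw [← he', τ.symm_apply_apply]⟩
  let φ : F →+ F := (τ : F →+ F).comp (AddMonoidHom.mulLeft a)
  let ψ : F →+ F := (AddMonoidHom.mulLeft a⁻¹).comp (τ.symm : F →+ F)
  have hφ : ∀ (e : E) (x : F), ∃ e' : E, φ (e • x) = e' • φ x := fun e x => by
    obtain ⟨e', he'⟩ := hτE e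
    refine ⟨e', ?_⟩
    show τ (a * (e • x)) = e' • τ (a * x)
    rw [Algebra.smul_def, Algebra.smul_def, mul_left_comm, map_mul, he']
  have hψ : ∀ (e : E) (x : F), ∃ e' : E, ψ (e • x) = e' • ψ x := fun e x => by
    obtain ⟨e', he'⟩ := hτE' e
    refine ⟨e', ?_⟩
    show a⁻¹ * τ.symm (e • x) = e' • (a⁻¹ * τ.symm x)
    rw [Algebra.smul_def, Algebra.smul_def, map_mul, he', mul_left_comm]
  refine le_antisymm (rankWt_comp_le φ hφ v) ?_
  calc rankWt E v = rankWt E (ψ ∘ φ ∘ v) := by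
        congr 1; funext m; simp [φ, ψ, inv_mul_cancel_left₀ ha]
    _ ≤ rankWt E (φ ∘ v) := rankWt_comp_le ψ hψ _

lemma rankWt_vecMul_map_le {N' : ℕ} (v : Fin N → F) (B : Matrix (Fin N) (Fin N') E) :
    rankWt E (v ᵥ* B.map (algebraMap E F)) ≤ rankWt E v := by
  refine rankWt_le_of_forall_mem_span fun j => ?_
  have : (v ᵥ* B.map (algebraMap E F)) j = ∑ k, B k j • v k := by
    simp [Matrix.vecMul, dotProduct, Algebra.smul_def, mul_comm]
  rw [this]
  exact sum_mem fun k _ => smul_mem _ _ (subset_span ⟨k, rfl⟩)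

lemma rankWt_vecMul_map_of_mul_eq_one {N' : ℕ} (v : Fin N → F) {B : Matrix (Fin N) (Fin N') E}
    {B' : Matrix (Fin N') (Fin N) E} (h : B * B' = 1) :
    rankWt E (v ᵥ* B.map (algebraMap E F)) = rankWt E v := by
  refine le_antisymm (rankWt_vecMul_map_le v B) ?_
  calc rankWt E v = rankWt E ((v ᵥ* B.map (algebraMap E F)) ᵥ* B'.map (algebraMap E F)) := by
        rw [Matrix.vecMul_vecMul, ← Matrix.map_mul, h, Matrix.map_one _ (map_zero _) (map_one _),
          Matrix.vecMul_one]
    _ ≤ _ := rankWt_vecMul_map_le _ B'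

lemma single_one_mem_span_one (k m : Fin N) :
    (Pi.single k 1 : Fin N → F) m ∈ E ∙ (1 : F) := by
  rw [Pi.single_apply]
  split_ifs
  · exact mem_span_singleton_self 1
  · exact zero_mem _

lemma rankWt_single_one_le_one (k : Fin N) : rankWt E (Pi.single k 1 : Fin N → F) ≤ 1 :=
  rankWt_le_one_iff.mpr ⟨1, single_one_mem_span_one k⟩

lemma rankWt_single_one_add_single_one_le_one (k k' : Fin N) :
    rankWt E (Pi.single k 1 + Pi.single k' 1 : Fin N → F) ≤ 1 :=
  rankWt_le_one_iff.mpr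
    ⟨1, fun m => add_mem (single_one_mem_span_one k m) (single_one_mem_span_one k' m)⟩

lemma exists_eq_smul_of_rankWt_add_le_one {a b : Fin N → F} {α β : F}
    (hαβ : LinearIndependent E ![α, β]) (ha : ∀ m, a m ∈ E ∙ α) (hb : ∀ m, b m ∈ E ∙ β)
    (hab : rankWt E (a + b) ≤ 1) : ∃ (z : Fin N → F) (s t : F), a = s • z ∧ b = t • z := by
  choose x hx using fun m => mem_span_singleton.mp (ha m)
  choose y hy using fun m => mem_span_singleton.mp (hb m)
  have hcoord : ∀ {c d c' d' : E}, c • α + d • β = c' • α + d' • β → c = c' ∧ d = d' := by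
    intro c d c' d' h
    have := LinearIndependent.pair_iff.mp hαβ (c - c') (d - d')
      (by rw [sub_smul, sub_smul]; linear_combination (norm := module) h)
    exact ⟨sub_eq_zero.mp this.1, sub_eq_zero.mp this.2⟩
  by_cases h0 : a + b = 0
  · refine ⟨0, 0, 0, funext fun m => ?_, funext fun m => ?_⟩ <;>
    · have := hcoord (c := x m) (d := y m) (c' := 0) (d' := 0)
        (by rw [hx, hy, zero_smul, zero_smul, add_zero]; exact congrFun h0 m)
      simp [← hx, ← hy, this.1, this.2]
  obtain ⟨m₀, hm₀⟩ := Function.ne_iff.mp h0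
  choose w hw using fun m => mem_span_singleton.mp (mem_span_singleton_of_rankWt_le_one hab hm₀ m)
  have hxy : ∀ m, x m = w m * x m₀ ∧ y m = w m * y m₀ := fun m => by
    refine hcoord ?_
    rw [mul_smul, mul_smul, ← smul_add, hx, hy, hx, hy]
    exact (hw m).symm
  refine ⟨fun m => algebraMap E F (w m), a m₀, b m₀, funext fun m => ?_, funext fun m => ?_⟩
  · rw [Pi.smul_apply, smul_eq_mul, ← hx, ← hx, (hxy m).1, mul_smul, Algebra.smul_def, mul_comm]
  · rw [Pi.smul_apply, smul_eq_mul, ← hy, ← hy, (hxy m).2, mul_smul, Algebra.smul_def, mul_comm]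

end RankWeight

section SemilinearBlock

variable {E F : Type*} [Field E] [Field F] [Algebra E F] {N N' : ℕ} {σ : F ≃+* F}

lemma exists_forall_apply_single_mem_span (hN : 0 < N)
    (G : (Fin N → F) →ₛₗ[(σ : F →+* F)] (Fin N' → F)) (hinj : Function.Injective G)
    (hG : ∀ w, rankWt E w ≤ 1 → rankWt E (G w) ≤ 1) :
    ∃ x : F, x ≠ 0 ∧ ∀ k m, G (Pi.single k 1) m ∈ E ∙ x := by
  let k₀ : Fin N := ⟨0, hN⟩
  have hne : ∀ k, G (Pi.single k 1) ≠ 0 := fun k =>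
    (map_ne_zero_iff G hinj).mpr (Pi.single_ne_zero_iff.mpr one_ne_zero)
  choose x hx using fun k => rankWt_le_one_iff.mp (hG _ (rankWt_single_one_le_one (E := E) k))
  have hx₀ : x k₀ ≠ 0 := by
    rintro h
    refine hne k₀ (funext fun m => ?_)
    simpa [h] using hx k₀ m
  refine ⟨x k₀, hx₀, fun k => ?_⟩
  by_cases hdep : x k ∈ E ∙ x k₀
  · exact fun m => (span_singleton_le_iff_mem _ _).mpr hdep (hx k m)
  exfalso
  have hind : LinearIndependent E ![x k₀, x k] := (LinearIndependent.pair_iff' hx₀).mpr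
    fun c hc => hdep (mem_span_singleton.mpr ⟨c, hc⟩)
  obtain ⟨z, s, t, hs, ht⟩ := exists_eq_smul_of_rankWt_add_le_one hind (hx k₀) (hx k)
    (by rw [← map_add]; exact hG _ (rankWt_single_one_add_single_one_le_one k₀ k))
  have hker : G (σ.symm t • Pi.single k₀ 1 - σ.symm s • Pi.single k 1) = 0 := by
    rw [map_sub, map_smulₛₗ, map_smulₛₗ]
    simp [hs, ht, smul_smul, mul_comm]
  have hk : k ≠ k₀ := by rintro rfl; exact hdep (mem_span_singleton_self _)
  have ht0 := congrFun (hinj (hker.trans (map_zero G).symm)) k₀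
  simp [hk] at ht0
  exact hne k (by simp [ht, ht0])

lemma exists_inverse_of_bijective_vecMul_map (B : Matrix (Fin N) (Fin N') E)
    (h : Function.Bijective fun w : Fin N → F => w ᵥ* B.map (algebraMap E F)) :
    N = N' ∧ ∃ B' : Matrix (Fin N') (Fin N) E, B * B' = 1 ∧ B' * B = 1 := by
  obtain rfl : N = N' := by
    simpa using (LinearEquiv.ofBijective (B.map (algebraMap E F)).vecMulLinear h).finrank_eq
  have hmap : ∀ u : Fin N → E,
      (algebraMap E F ∘ u) ᵥ* B.map (algebraMap E F) = algebraMap E F ∘ (u ᵥ* B) :=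
    fun u => funext fun j => (RingHom.map_vecMul _ B u j).symm
  have hinj : Function.Injective B.vecMul := fun u v huv =>
    (algebraMap E F).injective.comp_left (h.1 (by simp only [hmap, huv]))
  have hdet := (Matrix.isUnit_iff_isUnit_det B).mp (Matrix.vecMul_injective_iff_isUnit.mp hinj)
  exact ⟨rfl, B⁻¹, B.mul_nonsing_inv hdet, B.nonsing_inv_mul hdet⟩

theorem exists_vecMul_of_semilinear_bijective (hN : 0 < N)
    (G : (Fin N → F) →ₛₗ[(σ : F →+* F)] (Fin N' → F)) (hbij : Function.Bijective G)
    (hG : ∀ w, rankWt E w ≤ 1 → rankWt E (G w) ≤ 1) :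
    ∃ α : F, α ≠ 0 ∧ ∃ B : Matrix (Fin N) (Fin N') E, N = N' ∧
      (∃ B' : Matrix (Fin N') (Fin N) E, B * B' = 1 ∧ B' * B = 1) ∧
      ∀ w, G w = (fun k => σ (α * w k)) ᵥ* B.map (algebraMap E F) := by
  obtain ⟨x, hx, hmem⟩ := exists_forall_apply_single_mem_span hN G hbij.1 hG
  obtain ⟨B, hB⟩ : ∃ B : Matrix (Fin N) (Fin N') E, ∀ k m, B k m • x = G (Pi.single k 1) m := by
    choose B hB using fun k m => mem_span_singleton.mp (hmem k m)
    exact ⟨B, hB⟩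
  have hG : ∀ w, G w = (fun k => σ (σ.symm x * w k)) ᵥ* B.map (algebraMap E F) :=
    fun w => funext fun j => calc
      G w j = ∑ k, σ (w k) * G (Pi.single k 1) j := by
        conv_lhs => rw [pi_eq_sum_univ' w]
        simp only [map_sum, map_smulₛₗ, Finset.sum_apply, Pi.smul_apply, smul_eq_mul]
        rfl
      _ = _ := by
        simp only [← hB, Matrix.vecMul, dotProduct, map_mul, RingEquiv.apply_symm_apply,
          Algebra.smul_def]
        exact Finset.sum_congr rfl fun k _ => by rw [Matrix.map_apply]; ring
  have hscale : Function.Bijective fun (v : Fin N → F) k => σ.symm (x⁻¹ * v k) :=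
    Function.bijective_iff_has_inverse.mpr ⟨fun w k => x * σ (w k),
      fun v => by simp [hx], fun w => by simp [hx]⟩
  have hvecMul : (fun v : Fin N → F => v ᵥ* B.map (algebraMap E F)) =
      G ∘ fun v k => σ.symm (x⁻¹ * v k) := funext fun v => by simp [hG, hx]
  obtain ⟨hNN, hinv⟩ := exists_inverse_of_bijective_vecMul_map B (hvecMul ▸ hbij.comp hscale)
  exact ⟨σ.symm x, by simpa using hx, B, hNN, hinv, hG⟩

end SemilinearBlock

section SumRank

variable {E F : Type*} [Field E] [Field F] [Algebra E F] {ℓ : ℕ} {n : Fin ℓ → ℕ}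

lemma srWtP_single (i : Fin ℓ) (w : Fin (n i) → F) :
    srWtP E (Pi.single i w : (i : Fin ℓ) → Fin (n i) → F) = rankWt E w := by
  rw [srWtP, Finset.sum_eq_single i (fun b _ hb => by rw [Pi.single_eq_of_ne hb,
    rankWt_eq_zero_iff.mpr rfl]) (by simp), Pi.single_eq_same]

lemma eq_of_srWtP_le_one {c : (i : Fin ℓ) → Fin (n i) → F} (hc : srWtP E c ≤ 1) {b b' : Fin ℓ}
    (hb : c b ≠ 0) (hb' : c b' ≠ 0) : b = b' := by
  by_contra h
  have := Finset.add_le_sum (f := fun i => rankWt E (c i)) (fun _ _ => Nat.zero_le _)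
    (Finset.mem_univ b) (Finset.mem_univ b') h
  have := rankWt_ne_zero_iff (E := E).mpr hb
  have := rankWt_ne_zero_iff (E := E).mpr hb'
  unfold srWtP at hc
  omega

lemma eq_of_srWtP_add_le_one {u v : (i : Fin ℓ) → Fin (n i) → F} (hu : srWtP E u ≤ 1)
    (hv : srWtP E v ≤ 1) (huv : srWtP E (u + v) ≤ 1) {b b' : Fin ℓ} (hb : u b ≠ 0)
    (hb' : v b' ≠ 0) : b = b' := by
  by_contra h
  have hub' : u b' = 0 := by_contra fun h' => h (eq_of_srWtP_le_one hu hb h')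
  have hvb : v b = 0 := by_contra fun h' => h (eq_of_srWtP_le_one hv h' hb')
  exact h (eq_of_srWtP_le_one huv (by simpa [hvb] using hb) (by simpa [hub'] using hb'))

variable {τ : F ≃+* F}
  (f : ((i : Fin ℓ) → Fin (n i) → F) →ₛₗ[(τ : F →+* F)] ((i : Fin ℓ) → Fin (n i) → F))

lemma exists_block_map (hn : ∀ i, 0 < n i) (hinj : Function.Injective f)
    (hW : ∀ u, srWtP E u ≤ 1 → srWtP E (f u) ≤ 1) :
    ∃ p : Fin ℓ → Fin ℓ, ∀ i w b, f (Pi.single i w) b ≠ 0 → b = p i := by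
  have hδ : ∀ i j, srWtP E (f (Pi.single i (Pi.single j 1))) ≤ 1 := fun i j =>
    hW _ (by rw [srWtP_single]; exact rankWt_single_one_le_one j)
  have hne : ∀ i, ∃ b, f (Pi.single i (Pi.single ⟨0, hn i⟩ 1)) b ≠ 0 := fun i =>
    Function.ne_iff.mp ((map_ne_zero_iff f hinj).mpr (by simp))
  choose p hp using hne
  have hbasis : ∀ i j b, f (Pi.single i (Pi.single j 1)) b ≠ 0 → b = p i := fun i j b hb =>
    eq_of_srWtP_add_le_one (hδ i j) (hδ i _) (by
      rw [← map_add, ← Pi.single_add]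
      exact hW _ (by rw [srWtP_single]; exact rankWt_single_one_add_single_one_le_one j _))
      hb (hp i)
  refine ⟨p, fun i w b hb => ?_⟩
  have hsum : f (Pi.single i w) = ∑ j, τ (w j) • f (Pi.single i (Pi.single j 1)) := by
    conv_lhs => rw [pi_eq_sum_univ' w]
    simp only [← LinearMap.single_apply F, map_sum, map_smul, map_smulₛₗ]
    rfl
  obtain ⟨j, hj⟩ : ∃ j, f (Pi.single i (Pi.single j 1)) b ≠ 0 := by
    by_contra! h
    exact hb (by simp [hsum, h])
  exact hbasis i j b hj

lemma exists_perm_block (hn : ∀ i, 0 < n i) (hbij : Function.Bijective f)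
    (hW : ∀ u, srWtP E u ≤ 1 → srWtP E (f u) ≤ 1) :
    ∃ π : Equiv.Perm (Fin ℓ), ∀ i w b, f (Pi.single i w) b ≠ 0 → b = π i := by
  obtain ⟨p, hp⟩ := exists_block_map f hn hbij.1 hW
  have hsurj : Function.Surjective p := fun b => by
    obtain ⟨c, hc⟩ := hbij.2 (Pi.single b fun _ => 1)
    by_contra! hpb
    have hcb : f c b = 0 := by
      rw [← Finset.univ_sum_single c, map_sum, Finset.sum_apply]
      exact Finset.sum_eq_zero fun i _ => by_contra fun h => hpb i (hp i _ b h).symm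
    rw [hc, Pi.single_eq_same] at hcb
    exact one_ne_zero (congrFun hcb ⟨0, hn b⟩)
  exact ⟨Equiv.ofBijective p ⟨Finite.injective_iff_surjective.mpr hsurj, hsurj⟩, hp⟩

variable {f} {π : Equiv.Perm (Fin ℓ)}

lemma apply_eq_apply_single (hπ : ∀ i w b, f (Pi.single i w) b ≠ 0 → b = π i)
    (c : (i : Fin ℓ) → Fin (n i) → F) (b : Fin ℓ) :
    f c b = f (Pi.single (π.symm b) (c (π.symm b))) b := by
  conv_lhs => rw [← Finset.univ_sum_single c]
  rw [map_sum, Finset.sum_apply]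
  refine Finset.sum_eq_single _ (fun i _ hi => by_contra fun h => hi ?_) (by simp)
  rw [hπ _ _ _ h, Equiv.symm_apply_apply]

lemma apply_single_eq_single (hπ : ∀ i w b, f (Pi.single i w) b ≠ 0 → b = π i) (b : Fin ℓ)
    (w : Fin (n (π.symm b)) → F) :
    f (Pi.single (π.symm b) w) = Pi.single b (f (Pi.single (π.symm b) w) b) := by
  funext b'
  by_cases h : b' = b
  · subst h; rw [Pi.single_eq_same]
  · rw [Pi.single_eq_of_ne h]
    exact by_contra fun h' => h (by simpa using hπ _ _ _ h')

lemma exists_block_formula (hπ : ∀ i w b, f (Pi.single i w) b ≠ 0 → b = π i)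
    (hn : ∀ i, 0 < n i) (hbij : Function.Bijective f)
    (hW : ∀ u, srWtP E u ≤ 1 → srWtP E (f u) ≤ 1) (b : Fin ℓ) :
    ∃ α : F, α ≠ 0 ∧ ∃ B : Matrix (Fin (n (π.symm b))) (Fin (n b)) E, n (π.symm b) = n b ∧
      (∃ B' : Matrix (Fin (n b)) (Fin (n (π.symm b))) E, B * B' = 1 ∧ B' * B = 1) ∧
      ∀ w, f (Pi.single (π.symm b) w) b = (fun k => τ (α * w k)) ᵥ* B.map (algebraMap E F) := by
  let G := (LinearMap.proj b).comp (f.comp (LinearMap.single F _ (π.symm b)))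
  have hG : ∀ w, f (Pi.single (π.symm b) w) = Pi.single b (G w) := apply_single_eq_single hπ b
  have hbijG : Function.Bijective G := by
    refine ⟨fun w w' h => ?_, fun y => ?_⟩
    · exact Pi.single_injective _ (hbij.1 (by rw [hG, hG, h]))
    · obtain ⟨c, hc⟩ := hbij.2 (Pi.single b y)
      refine ⟨c (π.symm b), ?_⟩
      change f (Pi.single _ _) b = y
      rw [← apply_eq_apply_single hπ, hc, Pi.single_eq_same]
  have hrank : ∀ w, rankWt E w ≤ 1 → rankWt E (G w) ≤ 1 := fun w hw => by
    have := hW _ ((srWtP_single (n := n) _ w).trans_le hw)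
    rwa [hG, srWtP_single] at this
  exact exists_vecMul_of_semilinear_bijective (hn _) G hbijG hrank

end SumRank

theorem semilinear_sumRank_isometries_general (E F : Type*) [Field E] [Field F] [Algebra E F]
    (ℓ : ℕ) (n : Fin ℓ → ℕ) (hn : ∀ i, 0 < n i)
    (f : ((i : Fin ℓ) → Fin (n i) → F) ≃+ ((i : Fin ℓ) → Fin (n i) → F))
    (τ : F ≃+* F) (hτE : τ '' Set.range (algebraMap E F) = Set.range (algebraMap E F))
    (hsemi : ∀ (lam : F) (v : (i : Fin ℓ) → Fin (n i) → F), f (lam • v) = τ lam • f v) :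
    (∀ u v : (i : Fin ℓ) → Fin (n i) → F,
        srWtP E (f u - f v) = srWtP E (u - v))
    ↔ ∃ (a : Fin ℓ → F) (π : Equiv.Perm (Fin ℓ))
        (M : (i : Fin ℓ) → Matrix (Fin (n (π.symm i))) (Fin (n i)) E),
        (∀ i, a i ≠ 0) ∧ (∀ i, n (π i) = n i) ∧
        (∀ i, ∃ M' : Matrix (Fin (n i)) (Fin (n (π.symm i))) E,
            M i * M' = 1 ∧ M' * M i = 1) ∧
        (∀ (c : (i : Fin ℓ) → Fin (n i) → F) (i : Fin ℓ) (j : Fin (n i)),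
            f c i j = ∑ k, τ (a i * c (π.symm i) k) * algebraMap E F (M i k j)) := by
  let fₛₗ : ((i : Fin ℓ) → Fin (n i) → F) →ₛₗ[(τ : F →+* F)] ((i : Fin ℓ) → Fin (n i) → F) :=
    { toFun := f, map_add' := map_add f, map_smul' := hsemi }
  constructor
  · intro hiso
    have hW : ∀ u, srWtP E u ≤ 1 → srWtP E (fₛₗ u) ≤ 1 := fun u hu =>
      show srWtP E (f u) ≤ 1 by simpa using (hiso u 0).trans_le (by simpa using hu)
    obtain ⟨π, hπ⟩ := exists_perm_block fₛₗ hn f.bijective hW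
    choose a ha M hnM hM hform using exists_block_formula hπ hn f.bijective hW
    refine ⟨a, π, M, ha, fun i => by simpa using (hnM (π i)).symm, hM, fun c i j => ?_⟩
    rw [show f c i = fₛₗ c i from rfl, apply_eq_apply_single hπ, hform]
    rfl
  · rintro ⟨a, π, M, ha, -, hM, hform⟩ u v
    have hblock : ∀ c i, rankWt E (f c i) = rankWt E (c (π.symm i)) := fun c i => by
      obtain ⟨M', hMM', -⟩ := hM i
      rw [show f c i = _ ᵥ* (M i).map (algebraMap E F) from funext (hform c i),
        rankWt_vecMul_map_of_mul_eq_one _ hMM', rankWt_ringEquiv_mul τ hτE (ha i)]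
    rw [← map_sub, srWtP, srWtP]
    simp only [hblock]
    exact Equiv.sum_comp π.symm fun i => rankWt E ((u - v) i)

/-- A semilinear bijection `f` of `F^n` (additive, with
`f(λv) = τ(λ)f(v)` for a field automorphism `τ` of `F` with `τ(E) = E`) is an
isometry for the sum-rank distance iff it is of the form
`c ↦ (τ(a₁ c^{(π⁻¹(1))}) M₁ | … | τ(a_ℓ c^{(π⁻¹(ℓ))}) M_ℓ)` for nonzero scalars
`aᵢ ∈ F*`, invertible matrices `Mᵢ` over `E`, and a permutation `π` of the blocks
with `n (π i) = n i`. -/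
theorem semilinear_sumRank_isometries (E F : Type*) [Field E] [Field F] [Algebra E F]
    (ℓ : ℕ) (hℓ : 0 < ℓ) (n : Fin ℓ → ℕ) (hn : ∀ i, 0 < n i)
    (f : ((i : Fin ℓ) → Fin (n i) → F) ≃+ ((i : Fin ℓ) → Fin (n i) → F))
    (τ : F ≃+* F) (hτE : τ '' Set.range (algebraMap E F) = Set.range (algebraMap E F))
    (hsemi : ∀ (lam : F) (v : (i : Fin ℓ) → Fin (n i) → F), f (lam • v) = τ lam • f v) :
    (∀ u v : (i : Fin ℓ) → Fin (n i) → F,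
        srWtP E (f u - f v) = srWtP E (u - v))
    ↔ ∃ (a : Fin ℓ → F) (π : Equiv.Perm (Fin ℓ))
        (M : (i : Fin ℓ) → Matrix (Fin (n (π.symm i))) (Fin (n i)) E),
        (∀ i, a i ≠ 0) ∧ (∀ i, n (π i) = n i) ∧
        (∀ i, ∃ M' : Matrix (Fin (n i)) (Fin (n (π.symm i))) E,
            M i * M' = 1 ∧ M' * M i = 1) ∧
        (∀ (c : (i : Fin ℓ) → Fin (n i) → F) (i : Fin ℓ) (j : Fin (n i)),
            f c i j = ∑ k, τ (a i * c (π.symm i) k) * algebraMap E F (M i k j)) :=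
  semilinear_sumRank_isometries_general E F ℓ n hn f τ hτE hsemi
end

section
/- Let a ∈ K be a primitive ℓ-th root of unity, b ≥ 0 an integer, 𝓔 = {β_1, …, β_m} a K-basis of L, and for 0 ≤ i ≤ ℓ−1 set B_i = {β_1 a^{bi}, …, β_m a^{bi}}. Let t, r be positive integers and k_0 < k_1 < ⋯ < k_r be integers in {0, …, n−1} with k_r − k_0 ≤ t + r − 1. For each 0 ≤ i ≤ ℓ−1 choose j_i distinct elements α_1^(i), …, α_{j_i}^(i) of B_i, where j_0 + ⋯ + j_{ℓ−1} = t + r. Then the (r+1) × (t+r) block matrix A_0 = (D̃_0 | ⋯ | D̃_{ℓ−1}) over L, where D̃_i has (s, u)-entry σ^{k_s}(α_u^(i)) a^{k_s i} for 0 ≤ s ≤ r and 1 ≤ u ≤ j_i, has rank r + 1. -/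
/-!
Write `A = algebraMap K L a` and `Tᵢ = Aⁱ • σ`, a `σ`-semilinear operator on `L` with
`Tᵢ ^ k = A^{ik} σ^k`, so that column `(i, j)` of `A₀` is `(Tᵢ ^ k_s (β_j A^{bi}))_s`. A relation
`∑ c_s row_s = 0` gives the skew polynomial `f = ∑ c_s X^{k_s - k₀}` of degree at most
`k_r - k₀ ≤ t + r - 1`, and `f(Tᵢ)` kills the `j_i` vectors `Tᵢ ^ k₀ (β_j A^{bi})`, which are
`K`-independent. But a nonzero skew polynomial of degree `W` has `∑ᵢ dim_K ker f(Tᵢ) ≤ W`: split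
off a right factor `X - γ` through a kernel vector, and note that for each `γ` the spaces
`ker (Tᵢ - γ)` have total dimension at most one. Indeed, a ratio of two eigenvectors `u` satisfies
`Aⁱ σ u = A^{i'} u`; taking norms gives `a^{im} = a^{i'm}`, so `i = i'` as `a^m` is a primitive
`ℓ`-th root of unity, and for `i = i'` it lies in the fixed field `K` of `σ`.
-/

open Module LinearMap Finset

theorem LinearMap.finrank_ker_comp_le {K V : Type*} [Field K] [AddCommGroup V] [Module K V]
    [FiniteDimensional K V] (g h : V →ₗ[K] V) :
    finrank K (ker (g ∘ₗ h)) ≤ finrank K (ker g) + finrank K (ker h) := by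
  have hsum := (h.domRestrict (ker (g ∘ₗ h))).finrank_range_add_finrank_ker
  have hrange : finrank K (range (h.domRestrict (ker (g ∘ₗ h)))) ≤ finrank K (ker g) :=
    Submodule.finrank_mono (by rintro _ ⟨x, rfl⟩; exact x.2)
  have hker : finrank K (ker (h.domRestrict (ker (g ∘ₗ h)))) ≤ finrank K (ker h) := by
    rw [ker_domRestrict, ← Submodule.finrank_map_subtype_eq]
    exact Submodule.finrank_mono (Submodule.map_comap_le _ _)
  omega

section SkewEval

variable {K L : Type*} [Field K] [Field L] [Algebra K L]

noncomputable def skewEval (T : L →ₗ[K] L) (f : ℕ → L) (N : ℕ) : L →ₗ[K] L :=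
  ∑ d ∈ range N, f d • T ^ d

theorem skewEval_apply (T : L →ₗ[K] L) (f : ℕ → L) (N : ℕ) (v : L) :
    skewEval T f N v = ∑ d ∈ range N, f d * (T ^ d) v := by
  simp [skewEval]

theorem skewEval_extend {ι : Type*} [Fintype ι] (T : L →ₗ[K] L) {e : ι → ℕ}
    (he : Function.Injective e) (c : ι → L) {N : ℕ} (hN : ∀ s, e s < N) :
    skewEval T (Function.extend e c 0) N = ∑ s, c s • T ^ e s := by
  have himage : univ.image e ⊆ range N := by simp [subset_iff, hN]
  rw [skewEval, ← sum_subset himage fun d _ hd => ?_, sum_image fun s _ s' _ h => he h]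
  · simp [he.extend_apply]
  · rw [Function.extend_apply' _ _ _ (by simpa using hd), Pi.zero_apply, zero_smul]

variable {σ : L ≃ₐ[K] L}

theorem pow_apply_mul_of_semilinear {T : L →ₗ[K] L} (hT : ∀ x v, T (x * v) = σ x * T v)
    (d : ℕ) (x v : L) :
    (T ^ d) (x * v) = (σ ^ d) x * (T ^ d) v := by
  induction d with
  | zero => simp
  | succ d ih => rw [pow_succ', Module.End.mul_apply, ih, hT, pow_succ', AlgEquiv.mul_apply,
      Module.End.mul_apply]

/- The relations say `f = g * (X - γ) + C (f 0 + g 0 * γ)` in the skew polynomial ring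
`L[X; σ]`, where `X * x = σ x * X`. -/
theorem exists_skew_div_X_sub (N : ℕ) (f : ℕ → L) (γ : L) (hf : ∀ d, N ≤ d → f (d + 1) = 0) :
    ∃ g : ℕ → L, (∀ d, N ≤ d → g d = 0) ∧
      ∀ d, f (d + 1) = g d - g (d + 1) * (σ ^ (d + 1)) γ := by
  induction N generalizing f γ with
  | zero => exact ⟨0, fun _ _ => rfl, fun d => by simpa using hf d (Nat.zero_le _)⟩
  | succ N ih =>
    obtain ⟨g, hg, hfg⟩ := ih (fun d => f (d + 1)) (σ γ) fun d hd => hf (d + 1) (by omega)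
    refine ⟨fun d => if d = 0 then f 1 + g 0 * σ γ else g (d - 1), fun d hd => ?_, ?_⟩
    · simp only [if_neg (show d ≠ 0 by omega)]
      exact hg _ (by omega)
    · rintro (_ | d)
      · simp
      · simp only [Nat.add_eq_zero_iff, one_ne_zero, and_false, if_false, Nat.add_sub_cancel]
        rw [hfg d, pow_succ σ (d + 1), AlgEquiv.mul_apply]

theorem skewEval_succ_eq_comp_add {T : L →ₗ[K] L} (hT : ∀ x v, T (x * v) = σ x * T v) {N : ℕ}
    {f g : ℕ → L} {γ : L} (hg : ∀ d, N ≤ d → g d = 0)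
    (hfg : ∀ d, f (d + 1) = g d - g (d + 1) * (σ ^ (d + 1)) γ) :
    skewEval T f (N + 1) = skewEval T g N ∘ₗ (T - γ • 1) + (f 0 + g 0 * γ) • 1 := by
  ext v
  let h : ℕ → L := fun d => g d * (σ ^ d) γ * (T ^ d) v
  have hshift : ∑ d ∈ range N, h (d + 1) = ∑ d ∈ range N, h d - h 0 := by
    have h1 := sum_range_succ' h N
    rw [sum_range_succ, show h N = 0 by simp [h, hg N le_rfl]] at h1
    linear_combination -h1
  have hlhs : skewEval T f (N + 1) v
      = ∑ d ∈ range N, (g d * (T ^ (d + 1)) v - h (d + 1)) + f 0 * v := by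
    rw [skewEval_apply, sum_range_succ']
    simp [h, hfg, sub_mul]
  have hrhs : skewEval T g N ((T - γ • 1) v) = ∑ d ∈ range N, (g d * (T ^ (d + 1)) v - h d) := by
    rw [skewEval_apply]
    refine sum_congr rfl fun d _ => ?_
    simp [h, pow_apply_mul_of_semilinear hT, pow_succ, mul_sub, mul_assoc]
  have h0 : h 0 = g 0 * γ * v := by simp [h]
  rw [LinearMap.add_apply, comp_apply, hrhs, hlhs, sum_sub_distrib, sum_sub_distrib, hshift, h0,
    LinearMap.smul_apply, Module.End.one_apply, smul_eq_mul]
  ring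

theorem sum_finrank_ker_skewEval_le [FiniteDimensional K L] {ι : Type*} (s : Finset ι)
    (T : ι → L →ₗ[K] L) (hT : ∀ i x v, T i (x * v) = σ x * T i v)
    (hroots : ∀ γ : L, ∑ i ∈ s, finrank K (ker (T i - γ • 1)) ≤ 1)
    (W : ℕ) (f : ℕ → L) (hf : ∀ d, W < d → f d = 0) (hf0 : f ≠ 0) :
    ∑ i ∈ s, finrank K (ker (skewEval (T i) f (W + 1))) ≤ W := by
  induction W generalizing f with
  | zero =>
    have hf00 : f 0 ≠ 0 := fun h0 =>
      hf0 (funext fun d => by rcases d with _ | d; exacts [h0, hf _ (by omega)])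
    have hker : ∀ i, ker (skewEval (T i) f 1) = ⊥ := fun i =>
      ker_eq_bot'.mpr fun v hv => by simpa [skewEval_apply, hf00] using hv
    simp [hker]
  | succ W ih =>
    by_cases hall : ∀ i ∈ s, ker (skewEval (T i) f (W + 1 + 1)) = ⊥
    · simp [sum_eq_zero fun i hi => (hall i hi).symm ▸ finrank_bot K L]
    push Not at hall
    obtain ⟨i₀, -, hne⟩ := hall
    obtain ⟨β, hβ, hβ0⟩ := Submodule.exists_mem_ne_zero_of_ne_bot hne
    -- Divide `f` on the right by `X - γ` with `T i₀ β = γ β`: the constant remainder kills `β`.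
    set γ := T i₀ β / β
    obtain ⟨g, hg, hfg⟩ := exists_skew_div_X_sub (σ := σ) (W + 1) f γ fun d hd => hf _ (by omega)
    have hdiv := fun i => skewEval_succ_eq_comp_add (hT i) hg hfg
    have hβγ : (T i₀ - γ • 1) β = 0 := by simp [γ, hβ0]
    have hρ : f 0 + g 0 * γ = 0 := by
      have h := congr($(hdiv i₀) β)
      rw [mem_ker.mp hβ, LinearMap.add_apply, comp_apply, hβγ, map_zero, zero_add,
        LinearMap.smul_apply, Module.End.one_apply, smul_eq_mul] at h
      exact (mul_eq_zero.mp h.symm).resolve_right hβ0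
    have hg0 : g ≠ 0 := by
      rintro rfl
      refine hf0 (funext fun d => ?_)
      rcases d with _ | d
      · simpa using hρ
      · simpa using hfg d
    calc ∑ i ∈ s, finrank K (ker (skewEval (T i) f (W + 1 + 1)))
        ≤ ∑ i ∈ s, (finrank K (ker (skewEval (T i) g (W + 1)))
            + finrank K (ker (T i - γ • 1))) := by
          refine sum_le_sum fun i _ => ?_
          rw [hdiv i, hρ, zero_smul, add_zero]
          exact finrank_ker_comp_le _ _
      _ = ∑ i ∈ s, finrank K (ker (skewEval (T i) g (W + 1)))
            + ∑ i ∈ s, finrank K (ker (T i - γ • 1)) := sum_add_distrib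
      _ ≤ W + 1 := add_le_add (ih g hg hg0) (hroots γ)

theorem card_le_finrank_ker_sum_smul_pow [FiniteDimensional K L] {ι κ : Type*} [Fintype ι]
    [Fintype κ] {T : L →ₗ[K] L} (hT : Function.Injective T) {x : ι → L}
    (hx : LinearIndependent K x) {k : κ → ℕ} {k₀ : ℕ} (hk₀ : ∀ s, k₀ ≤ k s) (c : κ → L)
    (hrel : ∀ j, ∑ s, c s * (T ^ k s) (x j) = 0) :
    Fintype.card ι ≤ finrank K (ker (∑ s, c s • T ^ (k s - k₀))) := by
  have hli : LinearIndependent K ((T ^ k₀) ∘ x) :=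
    hx.map' _ (ker_eq_bot.mpr (by rw [Module.End.coe_pow]; exact hT.iterate k₀))
  rw [← finrank_span_eq_card hli]
  refine Submodule.finrank_mono (Submodule.span_le.mpr ?_)
  rintro _ ⟨j, rfl⟩
  rw [SetLike.mem_coe, mem_ker, Function.comp_apply, LinearMap.sum_apply, ← hrel j]
  refine sum_congr rfl fun s _ => ?_
  rw [LinearMap.smul_apply, ← Module.End.mul_apply, ← pow_add, Nat.sub_add_cancel (hk₀ s),
    smul_eq_mul]

theorem linearIndependent_skew_rows [FiniteDimensional K L] {ι : Type*} [Fintype ι]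
    {n : ι → Type*} [∀ i, Fintype (n i)] (T : ι → L →ₗ[K] L)
    (hT : ∀ i x v, T i (x * v) = σ x * T i v) (hTinj : ∀ i, Function.Injective (T i))
    (hroots : ∀ γ : L, ∑ i, finrank K (ker (T i - γ • 1)) ≤ 1) (x : ∀ i, n i → L)
    (hx : ∀ i, LinearIndependent K (x i)) {κ : Type*} [Fintype κ] {k : κ → ℕ}
    (hk : Function.Injective k) {k₀ : ℕ} (hk₀ : ∀ s, k₀ ≤ k s)
    (hspread : ∀ s, k s - k₀ < ∑ i, Fintype.card (n i)) :
    LinearIndependent L fun s (p : Σ i, n i) => (T p.1 ^ k s) (x p.1 p.2) := by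
  rw [Fintype.linearIndependent_iff]
  intro c hc
  by_contra! hne
  obtain ⟨s₀, hs₀⟩ := hne
  set W := ∑ i, Fintype.card (n i) - 1
  have hinj : Function.Injective fun s => k s - k₀ := fun s s' h => by
    have := hk₀ s; have := hk₀ s'
    exact hk (by simp only at h; omega)
  set f := Function.extend (fun s => k s - k₀) c 0
  have hf : ∀ d, W < d → f d = 0 := fun d hd =>
    Function.extend_apply' _ _ _ (by rintro ⟨s, rfl⟩; have := hspread s; omega)
  have hf0 : f ≠ 0 := fun h => hs₀ (by rw [← hinj.extend_apply c 0 s₀]; exact congrFun h _)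
  have hkernel : ∀ i, Fintype.card (n i) ≤ finrank K (ker (skewEval (T i) f (W + 1))) := by
    intro i
    rw [skewEval_extend _ hinj c fun s => by have := hspread s; omega]
    refine card_le_finrank_ker_sum_smul_pow (hTinj i) (hx i) hk₀ c fun j => ?_
    simpa only [Finset.sum_apply, Pi.smul_apply, smul_eq_mul, Pi.zero_apply]
      using congrFun hc ⟨i, j⟩
  have hsum := (sum_le_sum fun i _ => hkernel i).trans
    (sum_finrank_ker_skewEval_le univ T hT hroots W f hf hf0)
  have := hspread s₀
  omega

end SkewEval

section PowSmulAlgEquiv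

variable {K L : Type*} [Field K] [Field L] [Algebra K L] {σ : L ≃ₐ[K] L}

theorem mem_ker_smul_algEquiv_sub (c γ v : L) :
    v ∈ ker (c • σ.toLinearMap - γ • 1) ↔ c * σ v = γ * v := by
  simp [sub_eq_zero]

theorem smul_algEquiv_injective {c : L} (hc : c ≠ 0) :
    Function.Injective (c • σ.toLinearMap) := fun v w h => by
  simpa [hc] using h

theorem smul_algEquiv_apply_mul (c x v : L) :
    (c • σ.toLinearMap) (x * v) = σ x * (c • σ.toLinearMap) v := by
  simp only [LinearMap.smul_apply, AlgEquiv.toLinearMap_apply, map_mul, smul_eq_mul]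
  ring

theorem pow_smul_algEquiv_apply {c : L} (hc : σ c = c) (n : ℕ) (v : L) :
    ((c • σ.toLinearMap) ^ n) v = c ^ n * (σ ^ n) v := by
  induction n with
  | zero => simp
  | succ n ih =>
    rw [pow_succ', Module.End.mul_apply, ih, pow_succ' σ, AlgEquiv.mul_apply]
    simp only [LinearMap.smul_apply, AlgEquiv.toLinearMap_apply, map_mul, map_pow, hc,
      smul_eq_mul]
    ring

theorem mul_apply_div_of_eigen {c c' γ v w : L} (hw0 : w ≠ 0) (hv : c * σ v = γ * v)
    (hw : c' * σ w = γ * w) : c * σ (v / w) = c' * (v / w) := by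
  have : σ w ≠ 0 := by simpa using hw0
  rw [map_div₀]
  field_simp
  linear_combination w * hv - v * hw

variable [FiniteDimensional K L]

theorem mem_range_algebraMap_of_apply_eq_self [IsGalois K L]
    (hσ : ∀ τ : L ≃ₐ[K] L, τ ∈ Subgroup.zpowers σ) {x : L} (hx : σ x = x) :
    x ∈ Set.range (algebraMap K L) :=
  (IsGalois.mem_range_algebraMap_iff_fixed x).mpr fun τ =>
    (Subgroup.zpowers_le (H := MulAction.stabilizer (L ≃ₐ[K] L) x)).mpr hx (hσ τ)

theorem finrank_ker_smul_algEquiv_sub_le_one [IsGalois K L]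
    (hσ : ∀ τ : L ≃ₐ[K] L, τ ∈ Subgroup.zpowers σ) {c : L} (hc : c ≠ 0) (γ : L) :
    finrank K (ker (c • σ.toLinearMap - γ • 1)) ≤ 1 := by
  by_cases hker : ker (c • σ.toLinearMap - γ • 1) = ⊥
  · rw [hker, finrank_bot]
    exact zero_le_one
  obtain ⟨w, hw, hw0⟩ := Submodule.exists_mem_ne_zero_of_ne_bot hker
  refine finrank_le_one ⟨w, hw⟩ fun ⟨v, hv⟩ => ?_
  rw [mem_ker_smul_algEquiv_sub] at hv hw
  have hfix : σ (v / w) = v / w :=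
    mul_left_cancel₀ hc (mul_apply_div_of_eigen hw0 hv hw)
  obtain ⟨x, hx⟩ := mem_range_algebraMap_of_apply_eq_self hσ hfix
  exact ⟨x, Subtype.ext (by simp [Algebra.smul_def, hx, hw0])⟩

theorem eq_of_eigen_pow_smul_algEquiv {a : K} {ℓ : ℕ} (ha : IsPrimitiveRoot a ℓ)
    (hℓ : ℓ.Coprime (finrank K L)) {i i' : ℕ} (hi : i < ℓ) (hi' : i' < ℓ) {γ v w : L}
    (hv0 : v ≠ 0) (hw0 : w ≠ 0) (hv : algebraMap K L a ^ i * σ v = γ * v)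
    (hw : algebraMap K L a ^ i' * σ w = γ * w) : i = i' := by
  have hnorm := congrArg (Algebra.norm K) (mul_apply_div_of_eigen hw0 hv hw)
  simp only [map_mul, Algebra.norm_eq_of_algEquiv, ← map_pow, Algebra.norm_algebraMap] at hnorm
  have hN : Algebra.norm K (v / w) ≠ 0 := by simp [hv0, hw0]
  refine (ha.pow_of_coprime _ hℓ.symm).pow_inj hi hi' ?_
  rw [pow_right_comm a i, pow_right_comm a i'] at hnorm
  exact mul_right_cancel₀ hN hnorm

theorem sum_finrank_ker_pow_smul_algEquiv_sub_le_one [IsGalois K L]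
    (hσ : ∀ τ : L ≃ₐ[K] L, τ ∈ Subgroup.zpowers σ) {a : K} {ℓ : ℕ} (ha : IsPrimitiveRoot a ℓ)
    (hℓ : ℓ.Coprime (finrank K L)) (γ : L) :
    ∑ i : Fin ℓ, finrank K (ker (algebraMap K L a ^ (i : ℕ) • σ.toLinearMap - γ • 1)) ≤ 1 := by
  set n : Fin ℓ → ℕ := fun i => finrank K (ker (algebraMap K L a ^ (i : ℕ) • σ.toLinearMap - γ • 1))
  have hA : ∀ i : Fin ℓ, algebraMap K L a ^ (i : ℕ) ≠ 0 := fun i =>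
    pow_ne_zero _ ((map_ne_zero _).mpr (ha.ne_zero i.pos.ne'))
  have heigen : ∀ i, n i ≠ 0 → ∃ v ≠ 0, algebraMap K L a ^ (i : ℕ) * σ v = γ * v := fun i hi => by
    obtain ⟨v, hv, hv0⟩ :=
      Submodule.exists_mem_ne_zero_of_ne_bot (mt Submodule.finrank_eq_zero.mpr hi)
    exact ⟨v, hv0, (mem_ker_smul_algEquiv_sub _ _ _).mp hv⟩
  have huniq : ∀ i ∈ univ.filter (n · ≠ 0), ∀ i' ∈ univ.filter (n · ≠ 0), i = i' := by
    intro i hi i' hi'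
    obtain ⟨v, hv0, hv⟩ := heigen i (mem_filter.mp hi).2
    obtain ⟨w, hw0, hw⟩ := heigen i' (mem_filter.mp hi').2
    exact Fin.ext (eq_of_eigen_pow_smul_algEquiv ha hℓ i.2 i'.2 hv0 hw0 hv hw)
  calc ∑ i, n i = ∑ i ∈ univ.filter (n · ≠ 0), n i := (sum_filter_ne_zero _).symm
    _ ≤ #(univ.filter (n · ≠ 0)) • 1 :=
      sum_le_card_nsmul _ _ _ fun i _ => finrank_ker_smul_algEquiv_sub_le_one hσ (hA i) γ
    _ ≤ 1 := by simpa using card_le_one.mpr huniq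

end PowSmulAlgEquiv

theorem rank_selected_columns_general
    -- the tower of fields E ⊆ F, K ⊆ L = FK with F/E of degree m, K/E of degree h
    (K L : Type*) [Field K] [Field L]
    [Algebra K L]
    (m ℓ : ℕ)
    -- L/K cyclic Galois of degree m with generator σ
    [IsGalois K L] (hLK : Module.finrank K L = m)
    (σ : L ≃ₐ[K] L) (hσgen : ∀ τ : L ≃ₐ[K] L, τ ∈ Subgroup.zpowers σ)
    -- ℓ coprime with m and with the characteristic of K
    (hlm : Nat.Coprime ℓ m)
    -- a primitive ℓ-th root of unity a ∈ K, an integer b ≥ 0, a K-basis 𝓔 of L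
    (a : K) (ha : IsPrimitiveRoot a ℓ) (b : ℕ) (β : Module.Basis (Fin m) K L)
    -- positive integers t, r and k₀ < ⋯ < k_r in {0,…,n-1} with k_r - k₀ ≤ t+r-1
    (t r : ℕ) (hr : 0 < r) (k : Fin (r + 1) → ℕ)
    (hkmono : StrictMono k)
    (hkspread : k (Fin.last r) - k 0 ≤ t + r - 1)
    -- the selections J i of j_i distinct elements of each B_i, with Σ j_i = t+r
    (J : Fin ℓ → Finset (Fin m)) (hJ : ∑ i, (J i).card = t + r) :
    Matrix.rank
      (Matrix.of fun (s : Fin (r + 1)) (p : {p : Fin ℓ × Fin m // p.2 ∈ J p.1}) =>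
        (σ ^ (k s)) (β p.1.2 * (algebraMap K L a) ^ (b * (p.1.1 : ℕ)))
          * (algebraMap K L a) ^ (k s * (p.1.1 : ℕ)) : Matrix _ _ L)
      = r + 1 := by
  have : FiniteDimensional K L := Module.Finite.of_basis β
  set A := algebraMap K L a
  set T : Fin ℓ → L →ₗ[K] L := fun i => A ^ (i : ℕ) • σ.toLinearMap
  have hA : ∀ i : Fin ℓ, A ≠ 0 := fun i => (map_ne_zero _).mpr (ha.ne_zero i.pos.ne')
  have hx : ∀ i, LinearIndependent K fun j : J i => β j * A ^ (b * (i : ℕ)) := fun i =>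
    (β.linearIndependent.comp _ Subtype.val_injective).map' (mulRight K _)
      (ker_eq_bot.mpr (mul_left_injective₀ (pow_ne_zero _ (hA i))))
  have hrows := linearIndependent_skew_rows T (fun i => smul_algEquiv_apply_mul _)
    (fun i => smul_algEquiv_injective (pow_ne_zero _ (hA i)))
    (sum_finrank_ker_pow_smul_algEquiv_sub_le_one hσgen ha (hLK ▸ hlm)) _ hx hkmono.injective
    (fun s => hkmono.monotone (Fin.zero_le s)) fun s => by
      have := hkmono.monotone (Fin.le_last s)
      simp only [Fintype.card_coe, hJ]
      omega
  calc _ = Matrix.rank ((Matrix.of fun s (p : Σ i, J i) => (T p.1 ^ k s) (β p.2 * A ^ (b * p.1)))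
        |>.submatrix (Equiv.refl _) (Equiv.subtypeProdEquivSigmaSubtype fun i j => j ∈ J i)) := by
        congr
        ext s ⟨⟨i, j⟩, hj⟩
        change (σ ^ k s) (β j * A ^ (b * i)) * A ^ (k s * i) = (T i ^ k s) (β j * A ^ (b * i))
        rw [pow_smul_algEquiv_apply (by rw [map_pow, AlgEquiv.commutes]), ← pow_mul,
          Nat.mul_comm i, mul_comm]
    _ = r + 1 := by
      rw [Matrix.rank_submatrix]
      exact (LinearIndependent.rank_matrix (M := Matrix.of _) hrows).trans (Fintype.card_fin _)

/-- Let `a ∈ K` be a primitive `ℓ`-th root of unity, `𝓔 = {β₁,…,β_m}`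
a `K`-basis of `L` and `B_i = {β₁a^{bi},…,β_m a^{bi}}`. Choose `j_i` distinct elements
of each `B_i` (given by subsets `J i ⊆ {1,…,m}`) with `Σ j_i = t + r`, and integers
`k₀ < ⋯ < k_r` in `{0,…,n-1}` with `k_r - k₀ ≤ t + r - 1`. Then the `(r+1) × (t+r)`
matrix `A₀ = (D̃₀ | ⋯ | D̃_{ℓ-1})` with entries `σ^{k_s}(α_u^{(i)}) a^{k_s i}`
has rank `r + 1`. -/
theorem rank_selected_columns
    -- the tower of fields E ⊆ F, K ⊆ L = FK with F/E of degree m, K/E of degree h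
    (E F K L : Type*) [Field E] [Field F] [Field K] [Field L]
    [Algebra E F] [Algebra E K] [Algebra E L] [Algebra F L] [Algebra K L]
    [IsScalarTower E F L] [IsScalarTower E K L]
    (m h ℓ : ℕ) [NeZero m] [NeZero ℓ]
    (hFE : Module.finrank E F = m) (hKE : Module.finrank E K = h)
    (hcap : Set.range (algebraMap F L) ∩ Set.range (algebraMap K L)
      = Set.range (algebraMap E L))
    (hcomp : Algebra.adjoin K (Set.range (algebraMap F L)) = ⊤)
    -- L/K cyclic Galois of degree m with generator σ
    [IsGalois K L] (hLK : Module.finrank K L = m)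
    (σ : L ≃ₐ[K] L) (hσgen : ∀ τ : L ≃ₐ[K] L, τ ∈ Subgroup.zpowers σ)
    -- ℓ coprime with m and with the characteristic of K
    (hlm : Nat.Coprime ℓ m) (hchar : (ℓ : K) ≠ 0)
    -- a primitive ℓ-th root of unity a ∈ K, an integer b ≥ 0, a K-basis 𝓔 of L
    (a : K) (ha : IsPrimitiveRoot a ℓ) (b : ℕ) (β : Module.Basis (Fin m) K L)
    -- positive integers t, r and k₀ < ⋯ < k_r in {0,…,n-1} with k_r - k₀ ≤ t+r-1
    (t r : ℕ) (ht : 0 < t) (hr : 0 < r) (k : Fin (r + 1) → ℕ)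
    (hkmono : StrictMono k) (hkn : ∀ s, k s < ℓ * m)
    (hkspread : k (Fin.last r) - k 0 ≤ t + r - 1)
    -- the selections J i of j_i distinct elements of each B_i, with Σ j_i = t+r
    (J : Fin ℓ → Finset (Fin m)) (hJ : ∑ i, (J i).card = t + r) :
    Matrix.rank
      (Matrix.of fun (s : Fin (r + 1)) (p : {p : Fin ℓ × Fin m // p.2 ∈ J p.1}) =>
        (σ ^ (k s)) (β p.1.2 * (algebraMap K L a) ^ (b * (p.1.1 : ℕ)))
          * (algebraMap K L a) ^ (k s * (p.1.1 : ℕ)) : Matrix _ _ L)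
      = r + 1 :=
  rank_selected_columns_general K L m ℓ hLK σ hσgen hlm a ha b β t r hr k hkmono hkspread J hJ
end

section
/- Let a ∈ K be a primitive ℓ-th root of unity, b ≥ 0 an integer, 𝓔 = {β_1, …, β_m} a K-basis of L, and for 0 ≤ i ≤ ℓ−1 set B_i = {β_1 a^{bi}, …, β_m a^{bi}}. Let t, r be positive integers and k_0 < k_1 < ⋯ < k_r be integers in {0, …, n−1} with k_r − k_0 ≤ t + r − 1. For each 0 ≤ i ≤ ℓ−1 choose j_i distinct elements α_1^(i), …, α_{j_i}^(i) of B_i, where j_0 + ⋯ + j_{ℓ−1} = t + r, and let D̃_i be the (r+1) × j_i matrix with (s, u)-entry σ^{k_s}(α_u^(i)) a^{k_s i}. Let s be a positive integer coprime with ℓ and with m. For 0 ≤ i ≤ t − 1, let A_i be the block matrix over L whose (j, k)-th block, for 0 ≤ j ≤ i and 0 ≤ k ≤ ℓ−1, is σ^{js}(D̃_k) a^{kjs} (σ applied entrywise). Then rank(A_i) ≥ r + i + 1; in particular rank(A_{t−1}) = r + t. -/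
/-!
Write `f_p(e) = σ^e(x_p) a^{e i}` for the column `p = (i, u)`, where `x_p = β_u a^{b i}`; the row
of `A_i` indexed by `(j, q)` is then `(f_p(j s + k_q))_p`.

An Artin-type induction shows that any `N` consecutive exponents, `N` the number of columns, give
an invertible matrix: normalise one coefficient of a relation to `1` and subtract the relation from
its shift by one. This kills that coefficient, so by induction all derived coefficients vanish,
which forces every coefficient to lie in `K` and to carry the same power of `a` as the normalised
one (the `m`-th powers of the `a^i` are distinct since `ℓ` and `m` are coprime); the `K`-linear
independence of the `β_u` then gives a contradiction. As `k_0, …, k_r` lie in such a window,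
`rank A_0 = r + 1`.

If `rank A_{i+1} = rank A_i`, the two kernels agree. The twisted shift
`c ↦ (σ^{-s}(c_p) a^{s i})_p` maps `ker A_{i+1}` into `ker A_i`, so a vector of the common kernel
satisfies its relation at every exponent `k_0 + j s`, hence, the `f_p` being `ℓ m`-periodic and
`s` prime to `ℓ m`, at every exponent, and it vanishes. So the rank increases at each step until
it reaches `t + r`.
-/

/-- The matrix `A_i` of Lemma 3: its `(j,k)`-th block, `0 ≤ j ≤ i`, `0 ≤ k ≤ ℓ-1`,
is `σ^{js}(D̃_k) a^{kjs}`, where `D̃_k` is the matrix with `(srow,u)`-entry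
`σ^{k_{srow}}(α_u^{(k)}) a^{k_{srow} k}` and `α_u^{(k)} = β_u a^{bk}`. -/
noncomputable def roosMat {K L : Type*} [Field K] [Field L] [Algebra K L]
    (σ : L ≃ₐ[K] L) {m ℓ : ℕ} (a : K) (b : ℕ) (β : Module.Basis (Fin m) K L)
    {r : ℕ} (k : Fin (r + 1) → ℕ) (s : ℕ) (J : Fin ℓ → Finset (Fin m)) (i : ℕ) :
    Matrix (Fin (i + 1) × Fin (r + 1)) {p : Fin ℓ × Fin m // p.2 ∈ J p.1} L :=
  Matrix.of fun q p =>
    (σ ^ ((q.1 : ℕ) * s + k q.2)) (β p.1.2 * (algebraMap K L a) ^ (b * (p.1.1 : ℕ)))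
      * (algebraMap K L a) ^ ((k q.2 + (q.1 : ℕ) * s) * (p.1.1 : ℕ))

open Finset Module

section Galois

variable {K L : Type*} [Field K] [Field L] [Algebra K L]

theorem AlgEquiv.mem_range_algebraMap_of_apply_eq [FiniteDimensional K L] [IsGalois K L]
    {σ : L ≃ₐ[K] L} (hσ : ∀ τ : L ≃ₐ[K] L, τ ∈ Subgroup.zpowers σ) {y : L} (hy : σ y = y) :
    y ∈ Set.range (algebraMap K L) := by
  refine (IsGalois.mem_range_algebraMap_iff_fixed y).2 fun τ => ?_
  obtain ⟨j, rfl⟩ := Subgroup.mem_zpowers_iff.1 (hσ τ)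
  exact MulAction.mem_fixedBy_zpow (show σ • y = y from hy) j

theorem AlgEquiv.pow_finrank_eq_one [FiniteDimensional K L] [IsGalois K L] (σ : L ≃ₐ[K] L) :
    σ ^ finrank K L = 1 := by
  rw [← IsGalois.card_aut_eq_finrank]
  exact pow_card_eq_one'

theorem AlgEquiv.pow_apply_mul_pow (σ : L ≃ₐ[K] L) {c : L} {μ ν : K}
    (h : σ c * algebraMap K L ν = algebraMap K L μ * c) (j : ℕ) :
    (σ ^ j) c * algebraMap K L ν ^ j = algebraMap K L μ ^ j * c := by
  induction j with
  | zero => simp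
  | succ j ih =>
    calc (σ ^ (j + 1)) c * algebraMap K L ν ^ (j + 1)
        = (σ ^ j) (σ c * algebraMap K L ν) * algebraMap K L ν ^ j := by
          rw [pow_succ, AlgEquiv.mul_apply, map_mul, AlgEquiv.commutes]; ring
      _ = algebraMap K L μ ^ (j + 1) * c := by
          rw [h, map_mul, AlgEquiv.commutes, mul_assoc, ih]; ring

end Galois

theorem Function.Periodic.exists_apply_add_mul_eq {α : Type*} {f : ℕ → α} {n s : ℕ} [NeZero n]
    (hf : Function.Periodic f n) (hs : s.Coprime n) (e₀ e : ℕ) : ∃ j, f (e₀ + j * s) = f e := by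
  set u := ZMod.unitOfCoprime s hs
  refine ⟨(((e : ZMod n) - e₀) * ↑u⁻¹).val, ?_⟩
  rw [← hf.map_mod_nat, ← hf.map_mod_nat e]
  refine congrArg f ((ZMod.natCast_eq_natCast_iff' _ _ _).1 ?_)
  push_cast
  rw [ZMod.natCast_zmod_val, mul_assoc, show (↑u⁻¹ : ZMod n) * s = 1 by
    rw [← ZMod.coe_unitOfCoprime s hs, Units.inv_mul]]
  ring

theorem IsPrimitiveRoot.pow_pow_inj {M : Type*} [CommMonoid M] {a : M} {ℓ m : ℕ}
    (ha : IsPrimitiveRoot a ℓ) (hm : m.Coprime ℓ) {i j : ℕ} (hi : i < ℓ) (hj : j < ℓ)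
    (h : (a ^ i) ^ m = (a ^ j) ^ m) : i = j := by
  rw [← pow_mul, ← pow_mul, mul_comm, pow_mul, mul_comm j, pow_mul] at h
  exact (ha.pow_of_coprime m hm).pow_inj hi hj h

theorem Matrix.rank_add_finrank_ker {R m n : Type*} [Field R] [Fintype n] (A : Matrix m n R) :
    A.rank + finrank R (LinearMap.ker A.mulVecLin) = Fintype.card n := by
  rw [Matrix.rank, LinearMap.finrank_range_add_finrank_ker, Module.finrank_fintype_fun_eq_card]

section Twisted

variable {K L ι : Type*} [Field K] [Field L] [Algebra K L]
variable (σ : L ≃ₐ[K] L) (x : ι → L) (w : ι → K)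

noncomputable def twistedPow (p : ι) (e : ℕ) : L := (σ ^ e) (x p) * algebraMap K L (w p) ^ e

noncomputable def twistedSum (T : Finset ι) (c : ι → L) (e : ℕ) : L :=
  ∑ p ∈ T, twistedPow σ x w p e * c p

noncomputable def twistShift (t : ℕ) (c : ι → L) : ι → L :=
  fun p => (σ⁻¹ ^ t) (c p) * algebraMap K L (w p) ^ t

theorem twistedPow_add (p : ι) (e t : ℕ) :
    twistedPow σ x w p (e + t) = (σ ^ t) (twistedPow σ x w p e) * algebraMap K L (w p) ^ t := by
  rw [twistedPow, twistedPow, map_mul, map_pow, AlgEquiv.commutes, ← AlgEquiv.mul_apply, ← pow_add,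
    add_comm t, pow_add (algebraMap K L (w p)), mul_assoc]

@[simp] theorem twistedSum_sub (T : Finset ι) (c c' : ι → L) (e : ℕ) :
    twistedSum σ x w T (c - c') e = twistedSum σ x w T c e - twistedSum σ x w T c' e := by
  simp only [twistedSum, Pi.sub_apply, mul_sub, sum_sub_distrib]

@[simp] theorem twistedSum_smul (T : Finset ι) (y : L) (c : ι → L) (e : ℕ) :
    twistedSum σ x w T (y • c) e = y * twistedSum σ x w T c e := by
  simp only [twistedSum, Pi.smul_apply, smul_eq_mul, mul_sum, mul_left_comm]

theorem twistedSum_periodic {n : ℕ} (hσn : σ ^ n = 1) (hwn : ∀ p, w p ^ n = 1) (T : Finset ι)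
    (c : ι → L) : Function.Periodic (twistedSum σ x w T c) n := fun e => by
  simp only [twistedSum, twistedPow_add, hσn, ← map_pow, hwn, AlgEquiv.one_apply, map_one, mul_one]

theorem twistShift_zero (c : ι → L) : twistShift σ w 0 c = c := by
  ext p; simp [twistShift]

theorem twistShift_add (t t' : ℕ) (c : ι → L) :
    twistShift σ w (t + t') c = twistShift σ w t (twistShift σ w t' c) := by
  ext p; simp only [twistShift, pow_add, AlgEquiv.mul_apply, map_mul, map_pow, AlgEquiv.commutes]
  ring

theorem apply_twistedSum_twistShift (T : Finset ι) (t : ℕ) (c : ι → L) (e : ℕ) :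
    (σ ^ t) (twistedSum σ x w T (twistShift σ w t c) e) = twistedSum σ x w T c (e + t) := by
  simp only [twistedSum, twistShift, map_sum, map_mul, map_pow, AlgEquiv.commutes, twistedPow_add,
    ← AlgEquiv.mul_apply, inv_pow, mul_inv_cancel, AlgEquiv.one_apply]
  refine sum_congr rfl fun p _ => by ring

theorem twistedSum_twistShift_eq_zero_iff (T : Finset ι) (t : ℕ) (c : ι → L) (e : ℕ) :
    twistedSum σ x w T (twistShift σ w t c) e = 0 ↔ twistedSum σ x w T c (e + t) = 0 := by
  rw [← apply_twistedSum_twistShift, map_eq_zero_iff _ (σ ^ t).injective]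

variable {σ x w}

theorem exists_algebraMap_of_inv_apply_mul_eq [FiniteDimensional K L] [IsGalois K L]
    (hσ : ∀ τ : L ≃ₐ[K] L, τ ∈ Subgroup.zpowers σ) {μ ν : K} (hν : ν ≠ 0)
    (hμν : μ ^ finrank K L = ν ^ finrank K L → μ = ν) {c : L}
    (h : σ⁻¹ c * algebraMap K L μ = algebraMap K L ν * c) :
    ∃ y : K, c = algebraMap K L y ∧ (y ≠ 0 → μ = ν) := by
  by_cases hc : c = 0
  · exact ⟨0, by simp [hc], fun h0 => absurd rfl h0⟩
  have hσc : σ c * algebraMap K L ν = algebraMap K L μ * c := by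
    have := congrArg σ h
    rw [map_mul, map_mul, AlgEquiv.commutes, AlgEquiv.commutes, ← AlgEquiv.mul_apply,
      mul_inv_cancel, AlgEquiv.one_apply] at this
    linear_combination -this
  have hμν' : μ = ν := hμν <| (algebraMap K L).injective <| by
    have := σ.pow_apply_mul_pow hσc (finrank K L)
    rw [σ.pow_finrank_eq_one, AlgEquiv.one_apply, ← map_pow, ← map_pow, mul_comm] at this
    exact (mul_right_cancel₀ hc this).symm
  subst hμν'
  have hfix : σ c = c := mul_right_cancel₀ (by simpa using hν) (hσc.trans (mul_comm _ _))
  obtain ⟨y, hy⟩ := AlgEquiv.mem_range_algebraMap_of_apply_eq hσ hfix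
  exact ⟨y, hy.symm, fun _ => rfl⟩

theorem eq_zero_of_twistedSum_algebraMap_eq_zero {μ : K} (hx : LinearIndepOn K x {p | w p = μ})
    (hμ : μ ≠ 0) (T : Finset ι) (k : ι → K) (hk : ∀ p ∈ T, k p ≠ 0 → w p = μ) (e : ℕ)
    (h : twistedSum σ x w T (fun p => algebraMap K L (k p)) e = 0) : ∀ p ∈ T, k p = 0 := by
  classical
  have hsum : twistedSum σ x w T (fun p => algebraMap K L (k p)) e
      = algebraMap K L μ ^ e * (σ ^ e) (∑ p ∈ T with w p = μ, k p • x p) := by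
    rw [twistedSum, ← sum_filter_of_ne (p := fun p => w p = μ), map_sum, mul_sum]
    · refine sum_congr rfl fun p hp => ?_
      rw [twistedPow, (mem_filter.1 hp).2, map_smul, Algebra.smul_def]
      ring
    · intro p hp hne
      exact hk p hp (fun h0 => hne (by simp [h0]))
  rw [hsum, mul_eq_zero, map_eq_zero_iff _ (σ ^ e).injective] at h
  have hcomb := h.resolve_left (pow_ne_zero _ (by simpa using hμ))
  intro p hp
  by_contra hkp
  exact hkp (linearIndepOn_iff'.1 hx _ k (fun q hq => (mem_filter.1 hq).2) hcomb p
    (mem_filter.2 ⟨hp, hk p hp hkp⟩))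

theorem eq_zero_of_twistedSum_window [FiniteDimensional K L] [IsGalois K L]
    (hσ : ∀ τ : L ≃ₐ[K] L, τ ∈ Subgroup.zpowers σ) (hw : ∀ p, w p ≠ 0)
    (hwm : ∀ p q, w p ^ finrank K L = w q ^ finrank K L → w p = w q)
    (hx : ∀ μ : K, LinearIndepOn K x {p | w p = μ}) (T : Finset ι) (c : ι → L) (e₀ : ℕ)
    (hc : ∀ d < #T, twistedSum σ x w T c (e₀ + d) = 0) : ∀ p ∈ T, c p = 0 := by
  classical
  induction T using Finset.strongInduction generalizing c with
  | H T ih =>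
  intro p₀ hp₀
  by_contra hcp₀
  set c' := (c p₀)⁻¹ • c
  have hc'p₀ : c' p₀ = 1 := inv_mul_cancel₀ hcp₀
  have hc' : ∀ d < #T, twistedSum σ x w T c' (e₀ + d) = 0 := fun d hd => by
    rw [twistedSum_smul, hc d hd, mul_zero]
  -- Comparing consecutive relations eliminates the coefficient at `p₀`.
  set d := twistShift σ w 1 c' - algebraMap K L (w p₀) • c'
  have hd : ∀ p ∈ T.erase p₀, d p = 0 := by
    refine ih _ (erase_ssubset hp₀) d fun j hj => ?_
    rw [card_erase_of_mem hp₀] at hj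
    have hdp₀ : d p₀ = 0 := by
      simp only [d, twistShift, Pi.sub_apply, Pi.smul_apply, smul_eq_mul, hc'p₀, map_one, pow_one,
        one_mul, mul_one, sub_self]
    rw [twistedSum, sum_erase _ (by rw [hdp₀, mul_zero]), ← twistedSum, twistedSum_sub,
      twistedSum_smul, hc' j (by omega),
      (twistedSum_twistShift_eq_zero_iff σ x w T 1 c' (e₀ + j)).2
        (by rw [add_assoc]; exact hc' (j + 1) (by omega)), mul_zero, sub_zero]
  have hk : ∀ p ∈ T, ∃ y : K, c' p = algebraMap K L y ∧ (y ≠ 0 → w p = w p₀) := by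
    intro p hp
    by_cases hpp₀ : p = p₀
    · exact ⟨1, by rw [hpp₀, hc'p₀, map_one], fun _ => by rw [hpp₀]⟩
    refine exists_algebraMap_of_inv_apply_mul_eq hσ (hw p₀) (hwm p p₀) ?_
    simpa only [d, twistShift, Pi.sub_apply, Pi.smul_apply, smul_eq_mul, pow_one, sub_eq_zero]
      using hd p (mem_erase.2 ⟨hpp₀, hp⟩)
  choose! k hck hkw using hk
  have hrel : twistedSum σ x w T (fun p => algebraMap K L (k p)) e₀ = 0 := by
    rw [← hc' 0 (card_pos.2 ⟨p₀, hp₀⟩), add_zero]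
    exact sum_congr rfl fun p hp => by rw [hck p hp]
  have hk0 := eq_zero_of_twistedSum_algebraMap_eq_zero (hx (w p₀)) (hw p₀) T k hkw e₀ hrel p₀ hp₀
  rw [hck p₀ hp₀, hk0, map_zero] at hc'p₀
  exact zero_ne_one hc'p₀

end Twisted

section TwistedMatrix

variable {K L ι : Type*} [Field K] [Field L] [Algebra K L] [Fintype ι]
variable (σ : L ≃ₐ[K] L) (x : ι → L) (w : ι → K)

noncomputable def twistedMatrix {R : Type*} (E : R → ℕ) : Matrix R ι L :=
  Matrix.of fun ρ p => twistedPow σ x w p (E ρ)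

theorem mem_ker_twistedMatrix_iff {R : Type*} (E : R → ℕ) (c : ι → L) :
    c ∈ LinearMap.ker (twistedMatrix σ x w E).mulVecLin ↔
      ∀ ρ, twistedSum σ x w univ c (E ρ) = 0 := by
  simp only [LinearMap.mem_ker, Matrix.mulVecLin_apply, funext_iff, Pi.zero_apply]
  rfl

variable {σ x w}

theorem linearIndependent_row_twistedMatrix [FiniteDimensional K L] [IsGalois K L]
    (hσ : ∀ τ : L ≃ₐ[K] L, τ ∈ Subgroup.zpowers σ) (hw : ∀ p, w p ≠ 0)
    (hwm : ∀ p q, w p ^ finrank K L = w q ^ finrank K L → w p = w q)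
    (hx : ∀ μ : K, LinearIndepOn K x {p | w p = μ}) {R : Type*} {E : R → ℕ}
    (hE : Function.Injective E) (e₀ : ℕ) (hE₀ : ∀ ρ, e₀ ≤ E ρ ∧ E ρ < e₀ + Fintype.card ι) :
    LinearIndependent L (twistedMatrix σ x w E).row := by
  classical
  set eι := Fintype.equivFin ι
  set W := twistedMatrix σ x w fun p => e₀ + eι p
  have hW : IsUnit W := by
    rw [← Matrix.mulVec_injective_iff_isUnit]
    refine (injective_iff_map_eq_zero W.mulVecLin).2 fun c hc => funext fun p => ?_
    refine eq_zero_of_twistedSum_window hσ hw hwm hx univ c e₀ (fun d hd => ?_) p (mem_univ p)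
    simpa using (mem_ker_twistedMatrix_iff σ x w _ c).1 hc (eι.symm ⟨d, hd⟩)
  have hrow : (twistedMatrix σ x w E).row
      = W.row ∘ fun ρ => eι.symm ⟨E ρ - e₀, by have := hE₀ ρ; omega⟩ := by
    funext ρ p
    change _ = twistedPow σ x w p (e₀ + eι (eι.symm _))
    rw [Equiv.apply_symm_apply, Nat.add_sub_cancel' (hE₀ ρ).1]
    rfl
  rw [hrow]
  refine (Matrix.linearIndependent_rows_of_isUnit hW).comp _ fun ρ ρ' h => hE ?_
  have : E ρ - e₀ = E ρ' - e₀ := congrArg Fin.val (eι.symm.injective h)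
  have := hE₀ ρ; have := hE₀ ρ'
  omega

def stackedExponent (s : ℕ) {r : ℕ} (k : Fin (r + 1) → ℕ) (i : ℕ)
    (q : Fin (i + 1) × Fin (r + 1)) : ℕ :=
  q.1 * s + k q.2

variable (σ x w) in
theorem ker_stacked_succ_le (s : ℕ) {r : ℕ} (k : Fin (r + 1) → ℕ) (i : ℕ) :
    LinearMap.ker (twistedMatrix σ x w (stackedExponent s k (i + 1))).mulVecLin ≤
      LinearMap.ker (twistedMatrix σ x w (stackedExponent s k i)).mulVecLin := fun c hc => by
  rw [mem_ker_twistedMatrix_iff] at hc ⊢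
  exact fun q => hc (q.1.castSucc, q.2)

theorem twistShift_mem_ker_stacked {s r : ℕ} {k : Fin (r + 1) → ℕ} {i : ℕ} {c : ι → L}
    (hc : c ∈ LinearMap.ker (twistedMatrix σ x w (stackedExponent s k (i + 1))).mulVecLin) :
    twistShift σ w s c ∈ LinearMap.ker (twistedMatrix σ x w (stackedExponent s k i)).mulVecLin := by
  rw [mem_ker_twistedMatrix_iff] at hc ⊢
  intro q
  rw [twistedSum_twistShift_eq_zero_iff]
  convert hc (q.1.succ, q.2) using 2
  simp only [stackedExponent, Fin.val_succ]
  ring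

theorem ker_stacked_eq_bot_of_ker_succ_eq [FiniteDimensional K L] [IsGalois K L]
    (hσ : ∀ τ : L ≃ₐ[K] L, τ ∈ Subgroup.zpowers σ) (hw : ∀ p, w p ≠ 0)
    (hwm : ∀ p q, w p ^ finrank K L = w q ^ finrank K L → w p = w q)
    (hx : ∀ μ : K, LinearIndepOn K x {p | w p = μ}) {n : ℕ} [NeZero n] (hσn : σ ^ n = 1)
    (hwn : ∀ p, w p ^ n = 1) {s : ℕ} (hs : s.Coprime n) {r : ℕ} {k : Fin (r + 1) → ℕ} {i : ℕ}
    (h : LinearMap.ker (twistedMatrix σ x w (stackedExponent s k (i + 1))).mulVecLin =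
      LinearMap.ker (twistedMatrix σ x w (stackedExponent s k i)).mulVecLin) :
    LinearMap.ker (twistedMatrix σ x w (stackedExponent s k (i + 1))).mulVecLin = ⊥ := by
  refine (Submodule.eq_bot_iff _).2 fun c hc => ?_
  have hshift : ∀ j : ℕ, twistShift σ w (j * s) c ∈
      LinearMap.ker (twistedMatrix σ x w (stackedExponent s k (i + 1))).mulVecLin := by
    intro j
    induction j with
    | zero => rwa [zero_mul, twistShift_zero]
    | succ j ih =>
      rw [add_mul, one_mul, add_comm (j * s), twistShift_add, h]
      exact twistShift_mem_ker_stacked ih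
  have hprog : ∀ j : ℕ, twistedSum σ x w univ c (k 0 + j * s) = 0 := fun j => by
    rw [← twistedSum_twistShift_eq_zero_iff]
    simpa [stackedExponent] using (mem_ker_twistedMatrix_iff σ x w _ _).1 (hshift j) (0, 0)
  have hall : ∀ e, twistedSum σ x w univ c e = 0 := fun e => by
    obtain ⟨j, hj⟩ := (twistedSum_periodic σ x w hσn hwn univ c).exists_apply_add_mul_eq hs (k 0) e
    rw [← hj, hprog]
  exact funext fun p =>
    eq_zero_of_twistedSum_window hσ hw hwm hx univ c 0 (fun d _ => hall _) p (mem_univ p)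

theorem rank_stacked_zero [FiniteDimensional K L] [IsGalois K L]
    (hσ : ∀ τ : L ≃ₐ[K] L, τ ∈ Subgroup.zpowers σ) (hw : ∀ p, w p ≠ 0)
    (hwm : ∀ p q, w p ^ finrank K L = w q ^ finrank K L → w p = w q)
    (hx : ∀ μ : K, LinearIndepOn K x {p | w p = μ}) (s : ℕ) {r : ℕ} {k : Fin (r + 1) → ℕ}
    (hk : StrictMono k) (hspread : k (Fin.last r) < k 0 + Fintype.card ι) :
    (twistedMatrix σ x w (stackedExponent s k 0)).rank = r + 1 := by
  have hE : ∀ q, stackedExponent s k 0 q = k q.2 := fun q => by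
    simp [stackedExponent, Fin.fin_one_eq_zero q.1]
  rw [(linearIndependent_row_twistedMatrix hσ hw hwm hx (e₀ := k 0) ?_ ?_).rank_matrix]
  · simp
  · intro q q' h
    rw [hE, hE] at h
    exact Prod.ext (Fin.fin_one_eq_zero _ |>.trans (Fin.fin_one_eq_zero _).symm) (hk.injective h)
  · intro q
    rw [hE]
    exact ⟨hk.monotone (Fin.zero_le _), (hk.monotone (Fin.le_last _)).trans_lt hspread⟩

theorem le_rank_stacked [FiniteDimensional K L] [IsGalois K L]
    (hσ : ∀ τ : L ≃ₐ[K] L, τ ∈ Subgroup.zpowers σ)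
    (hwm : ∀ p q, w p ^ finrank K L = w q ^ finrank K L → w p = w q)
    (hx : ∀ μ : K, LinearIndepOn K x {p | w p = μ}) {n : ℕ} [NeZero n] (hσn : σ ^ n = 1)
    (hwn : ∀ p, w p ^ n = 1) {s : ℕ} (hs : s.Coprime n) {r : ℕ} {k : Fin (r + 1) → ℕ}
    (hk : StrictMono k) (hspread : k (Fin.last r) < k 0 + Fintype.card ι) {i : ℕ}
    (hi : r + i < Fintype.card ι) :
    r + i + 1 ≤ (twistedMatrix σ x w (stackedExponent s k i)).rank := by
  have hw : ∀ p, w p ≠ 0 := fun p h0 => by simpa [h0, NeZero.ne n] using hwn p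
  have hrank i := (twistedMatrix σ x w (stackedExponent s k i)).rank_add_finrank_ker
  -- The kernels shrink strictly until they vanish.
  suffices ∀ i, r + i < Fintype.card ι →
      finrank L (LinearMap.ker (twistedMatrix σ x w (stackedExponent s k i)).mulVecLin)
        + (r + i + 1) ≤ Fintype.card ι by
    have := this i hi; have := hrank i; omega
  intro i
  induction i with
  | zero =>
    intro _
    have := rank_stacked_zero hσ hw hwm hx s hk hspread
    have := hrank 0
    omega
  | succ i ih =>
    intro hi
    have hle := ker_stacked_succ_le σ x w s k i
    by_cases heq :
        finrank L (LinearMap.ker (twistedMatrix σ x w (stackedExponent s k (i + 1))).mulVecLin)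
          = finrank L (LinearMap.ker (twistedMatrix σ x w (stackedExponent s k i)).mulVecLin)
    · rw [ker_stacked_eq_bot_of_ker_succ_eq hσ hw hwm hx hσn hwn hs
        (Submodule.eq_of_le_of_finrank_eq hle heq), finrank_bot]
      omega
    · have := Submodule.finrank_mono hle
      have := ih (by omega)
      omega

end TwistedMatrix

section Roos

variable {K L : Type*} [Field K] [Field L] [Algebra K L] {m ℓ : ℕ}

theorem roosMat_eq_twistedMatrix (σ : L ≃ₐ[K] L) (a : K) (b : ℕ) (β : Basis (Fin m) K L) {r : ℕ}
    (k : Fin (r + 1) → ℕ) (s : ℕ) (J : Fin ℓ → Finset (Fin m)) (i : ℕ) :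
    roosMat σ a b β k s J i = twistedMatrix σ (fun p => β p.1.2 * algebraMap K L a ^ (b * p.1.1))
      (fun p => a ^ (p.1.1 : ℕ)) (stackedExponent s k i) := by
  ext q p
  simp only [roosMat, twistedMatrix, twistedPow, stackedExponent, Matrix.of_apply, map_pow,
    ← pow_mul]
  ring_nf

theorem linearIndepOn_roos_fiber [NeZero ℓ] {a : K} (ha : IsPrimitiveRoot a ℓ) (b : ℕ)
    (β : Basis (Fin m) K L) (J : Fin ℓ → Finset (Fin m)) (μ : K) :
    LinearIndepOn K (fun p : {p : Fin ℓ × Fin m // p.2 ∈ J p.1} =>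
      β p.1.2 * algebraMap K L a ^ (b * p.1.1)) {p | a ^ (p.1.1 : ℕ) = μ} := by
  have hinj : Function.Injective
      fun q : {p : {p : Fin ℓ × Fin m // p.2 ∈ J p.1} | a ^ (p.1.1 : ℕ) = μ} => q.1.1.2 := by
    rintro ⟨⟨⟨i, u⟩, hu⟩, hq⟩ ⟨⟨⟨i', u'⟩, hu'⟩, hq'⟩ (rfl : u = u')
    obtain rfl : i = i' := Fin.ext (ha.pow_inj i.2 i'.2 (hq.trans hq'.symm))
    rfl
  unfold LinearIndepOn
  convert (β.linearIndependent.comp _ hinj).units_smul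
    fun q => Units.mk0 (a ^ (b * (q.1.1.1 : ℕ))) (pow_ne_zero _ (ha.ne_zero (NeZero.ne ℓ))) using 1
  funext q
  simp [Algebra.smul_def, mul_comm]

end Roos

theorem rank_stacked_matrices_general
    (K L : Type*) [Field K] [Field L]
    [Algebra K L]
    (m ℓ : ℕ) [NeZero m] [NeZero ℓ]
    -- L/K cyclic Galois of degree m with generator σ
    [IsGalois K L] (hLK : Module.finrank K L = m)
    (σ : L ≃ₐ[K] L) (hσgen : ∀ τ : L ≃ₐ[K] L, τ ∈ Subgroup.zpowers σ)
    -- ℓ coprime with m and with the characteristic of K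
    (hlm : Nat.Coprime ℓ m)
    -- a primitive ℓ-th root of unity a ∈ K, an integer b ≥ 0, a K-basis 𝓔 of L
    (a : K) (ha : IsPrimitiveRoot a ℓ) (b : ℕ) (β : Module.Basis (Fin m) K L)
    -- positive integers t, r and k₀ < ⋯ < k_r in {0,…,n-1} with k_r - k₀ ≤ t+r-1
    (t r : ℕ) (ht : 0 < t) (k : Fin (r + 1) → ℕ)
    (hkmono : StrictMono k)
    (hkspread : k (Fin.last r) - k 0 ≤ t + r - 1)
    -- the selections J i of j_i distinct elements of each B_i, with Σ j_i = t+r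
    (J : Fin ℓ → Finset (Fin m)) (hJ : ∑ i, (J i).card = t + r)
    -- a positive integer s coprime with ℓ and m
    (s : ℕ) (hsl : Nat.Coprime s ℓ) (hsm : Nat.Coprime s m) :
    (∀ i : ℕ, i < t → r + i + 1 ≤ (roosMat σ a b β k s J i).rank) ∧
      (roosMat σ a b β k s J (t - 1)).rank = r + t := by
  have : FiniteDimensional K L := Module.Finite.of_basis β
  have hcard : Fintype.card {p : Fin ℓ × Fin m // p.2 ∈ J p.1} = t + r := by
    rw [Fintype.card_subtype, card_filter, Fintype.sum_prod_type, ← hJ]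
    simp
  have hσn : σ ^ (ℓ * m) = 1 := by rw [mul_comm, pow_mul, ← hLK, σ.pow_finrank_eq_one, one_pow]
  have hwn (p : {p : Fin ℓ × Fin m // p.2 ∈ J p.1}) : (a ^ (p.1.1 : ℕ)) ^ (ℓ * m) = 1 := by
    rw [← pow_mul, mul_left_comm, pow_mul, ha.pow_eq_one, one_pow]
  have hlower (i : ℕ) (hi : i < t) : r + i + 1 ≤ (roosMat σ a b β k s J i).rank := by
    rw [roosMat_eq_twistedMatrix]
    refine le_rank_stacked hσgen (fun p q h => ?_) (linearIndepOn_roos_fiber ha b β J) hσn hwn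
      (hsl.mul_right hsm) hkmono (by omega) (by omega)
    rw [hLK] at h
    rw [ha.pow_pow_inj hlm.symm p.1.1.2 q.1.1.2 h]
  have hupper := (roosMat σ a b β k s J (t - 1)).rank_le_card_width
  have := hlower (t - 1) (by omega)
  exact ⟨hlower, by omega⟩

/-- With the assumptions of Statement 2 and a positive integer `s`
coprime with `ℓ` and `m`, the stacked matrices `A_i` `(0 ≤ i ≤ t-1)` satisfy
`rank(A_i) ≥ r + i + 1`; in particular `rank(A_{t-1}) = r + t`. -/
theorem rank_stacked_matrices
    -- the tower of fields E ⊆ F, K ⊆ L = FK with F/E of degree m, K/E of degree h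
    (E F K L : Type*) [Field E] [Field F] [Field K] [Field L]
    [Algebra E F] [Algebra E K] [Algebra E L] [Algebra F L] [Algebra K L]
    [IsScalarTower E F L] [IsScalarTower E K L]
    (m h ℓ : ℕ) [NeZero m] [NeZero ℓ]
    (hFE : Module.finrank E F = m) (hKE : Module.finrank E K = h)
    (hcap : Set.range (algebraMap F L) ∩ Set.range (algebraMap K L)
      = Set.range (algebraMap E L))
    (hcomp : Algebra.adjoin K (Set.range (algebraMap F L)) = ⊤)
    -- L/K cyclic Galois of degree m with generator σ
    [IsGalois K L] (hLK : Module.finrank K L = m)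
    (σ : L ≃ₐ[K] L) (hσgen : ∀ τ : L ≃ₐ[K] L, τ ∈ Subgroup.zpowers σ)
    -- ℓ coprime with m and with the characteristic of K
    (hlm : Nat.Coprime ℓ m) (hchar : (ℓ : K) ≠ 0)
    -- a primitive ℓ-th root of unity a ∈ K, an integer b ≥ 0, a K-basis 𝓔 of L
    (a : K) (ha : IsPrimitiveRoot a ℓ) (b : ℕ) (β : Module.Basis (Fin m) K L)
    -- positive integers t, r and k₀ < ⋯ < k_r in {0,…,n-1} with k_r - k₀ ≤ t+r-1
    (t r : ℕ) (ht : 0 < t) (hr : 0 < r) (k : Fin (r + 1) → ℕ)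
    (hkmono : StrictMono k) (hkn : ∀ s', k s' < ℓ * m)
    (hkspread : k (Fin.last r) - k 0 ≤ t + r - 1)
    -- the selections J i of j_i distinct elements of each B_i, with Σ j_i = t+r
    (J : Fin ℓ → Finset (Fin m)) (hJ : ∑ i, (J i).card = t + r)
    -- a positive integer s coprime with ℓ and m
    (s : ℕ) (hs : 0 < s) (hsl : Nat.Coprime s ℓ) (hsm : Nat.Coprime s m) :
    (∀ i : ℕ, i < t → r + i + 1 ≤ (roosMat σ a b β k s J i).rank) ∧
      (roosMat σ a b β k s J (t - 1)).rank = r + t :=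
  rank_stacked_matrices_general K L m ℓ hLK σ hσgen hlm a ha b β t r ht k hkmono hkspread J hJ s hsl
    hsm
end

section
/- Let F be a field and let wt_X : F^N → ℝ be a weight function such that wt_X(v) ≥ 0 for all v, wt_X(v) = 0 if and only if v = 0, and wt_X(α v) = wt_X(v) for all α ∈ F* and v ∈ F^N. Define wt_SX on F^{ℓN} by wt_SX((c^(0) | … | c^(ℓ−1))) = Σ_{i=0}^{ℓ−1} wt_X(c^(i)). Then: (1) wt_SX(u ⊗ v) = wt_H(u) · wt_X(v) for every u ∈ F^ℓ and v ∈ F^N; and (2) for every nonzero F-linear code C_1 ⊆ F^ℓ and every nonzero F-linear code C_2 ⊆ F^N, the minimum of wt_SX over the nonzero elements of the product code C_1 ⊗ C_2 equals d_H(C_1) · d_X(C_2), where d_X(C_2) is the minimum of wt_X over the nonzero elements of C_2. -/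
/-- The Hamming weight of a vector: the number of nonzero coordinates. -/
noncomputable def hammingWt {F : Type*} [Zero F] {ℓ : ℕ} (u : Fin ℓ → F) : ℕ :=
  Nat.card {i : Fin ℓ // u i ≠ 0}

/-- The product code `C₁ ⊗ C₂`: the `F`-span of the elementary tensors
`u ⊗ v = (u₀v | … | u_{ℓ-1}v)` with `u ∈ C₁`, `v ∈ C₂`. -/
def prodCode (F : Type*) [Field F] {ℓ N : ℕ}
    (C₁ : Submodule F (Fin ℓ → F)) (C₂ : Submodule F (Fin N → F)) :
    Submodule F (Fin ℓ → Fin N → F) :=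
  Submodule.span F {w | ∃ u ∈ C₁, ∃ v ∈ C₂, w = fun i j => u i * v j}

lemma hammingWt_eq_card {F : Type*} [Zero F] {ℓ : ℕ} [DecidableEq F] (u : Fin ℓ → F) :
    hammingWt u = (Finset.univ.filter fun i => u i ≠ 0).card := by
  rw [hammingWt, Nat.card_eq_fintype_card, Fintype.card_subtype]

/-- Let `wt_X : F^N → ℝ` be a weight function which is nonnegative,
vanishes exactly at `0`, and is invariant under multiplication by nonzero scalars.
Let `wt_SX` be its additive extension to `F^{ℓN}`, block by block. Then:
(1) `wt_SX(u ⊗ v) = wt_H(u) · wt_X(v)`; and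
(2) for nonzero `F`-linear codes `C₁ ⊆ F^ℓ`, `C₂ ⊆ F^N`, the minimum of `wt_SX`
over the nonzero elements of `C₁ ⊗ C₂` equals `d_H(C₁) · d_X(C₂)`. -/
theorem prod_weight_general (F : Type*) [Field F] (ℓ N : ℕ) (hℓ : 0 < ℓ) (hN : 0 < N)
    (wtX : (Fin N → F) → ℝ)
    (hnonneg : ∀ v, 0 ≤ wtX v)
    (hzero : ∀ v, wtX v = 0 ↔ v = 0)
    (hscale : ∀ (α : F) (v : Fin N → F), α ≠ 0 → wtX (α • v) = wtX v) :
    (∀ (u : Fin ℓ → F) (v : Fin N → F),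
        (∑ i, wtX ((fun i j => u i * v j) i)) = (hammingWt u : ℝ) * wtX v) ∧
    (∀ (C₁ : Submodule F (Fin ℓ → F)) (C₂ : Submodule F (Fin N → F)),
        C₁ ≠ ⊥ → C₂ ≠ ⊥ → ∀ (dH : ℕ) (dX : ℝ),
        IsLeast {w : ℕ | ∃ u ∈ C₁, u ≠ 0 ∧ hammingWt u = w} dH →
        IsLeast {w : ℝ | ∃ v ∈ C₂, v ≠ 0 ∧ wtX v = w} dX →
        IsLeast {w : ℝ | ∃ c ∈ prodCode F C₁ C₂, c ≠ 0 ∧ (∑ i, wtX (c i)) = w}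
          ((dH : ℝ) * dX)) := by
  classical
  have h0 : wtX 0 = 0 := (hzero 0).mpr rfl
  have key : ∀ (u : Fin ℓ → F) (v : Fin N → F),
      (∑ i, wtX ((fun i j => u i * v j) i)) = (hammingWt u : ℝ) * wtX v := by
    intro u v
    have hterm : ∀ i : Fin ℓ, wtX (fun j => u i * v j) = if u i ≠ 0 then wtX v else 0 := by
      intro i
      by_cases h : u i = 0
      · rw [if_neg (not_not.mpr h)]
        have he : (fun j => u i * v j) = (0 : Fin N → F) := by funext j; simp [h]
        rw [he, h0]
      · rw [if_pos h]
        have := hscale (u i) v h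
        simpa [Pi.smul_def, smul_eq_mul] using this
    simp only [hterm]
    rw [Finset.sum_ite, Finset.sum_const, Finset.sum_const, smul_zero, add_zero,
      hammingWt_eq_card, nsmul_eq_mul]
  refine ⟨key, ?_⟩
  intro C₁ C₂ _ _ dH dX hdH hdX
  obtain ⟨⟨u, huC, hu0, hud⟩, hdHlb⟩ := hdH
  obtain ⟨⟨v, hvC, hv0, hvd⟩, hdXlb⟩ := hdX
  have hdXpos : 0 < dX := by
    rcases lt_or_eq_of_le (hnonneg v) with h | h
    · rwa [hvd] at h
    · exact absurd ((hzero v).mp h.symm) hv0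
  -- rows and columns of span elements
  have rowcol : ∀ c ∈ prodCode F C₁ C₂,
      (∀ i, c i ∈ C₂) ∧ (∀ j, (fun i => c i j) ∈ C₁) := by
    intro c hc
    induction hc using Submodule.span_induction with
    | mem x hx =>
      obtain ⟨a, haC, b, hbC, rfl⟩ := hx
      exact ⟨fun i => C₂.smul_mem (a i) hbC,
             fun j => by simpa [Pi.smul_def, smul_eq_mul, mul_comm] using
               C₁.smul_mem (b j) haC⟩
    | zero => exact ⟨fun i => C₂.zero_mem, fun j => C₁.zero_mem⟩
    | add x y hx hy ihx ihy =>
      exact ⟨fun i => C₂.add_mem (ihx.1 i) (ihy.1 i),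
             fun j => C₁.add_mem (ihx.2 j) (ihy.2 j)⟩
    | smul a x hx ihx =>
      exact ⟨fun i => C₂.smul_mem a (ihx.1 i), fun j => C₁.smul_mem a (ihx.2 j)⟩
  constructor
  · -- membership: c = u ⊗ v
    refine ⟨fun i j => u i * v j, Submodule.subset_span ⟨u, huC, v, hvC, rfl⟩, ?_, ?_⟩
    · obtain ⟨i, hi⟩ := Function.ne_iff.mp hu0
      obtain ⟨j, hj⟩ := Function.ne_iff.mp hv0
      intro hcon
      have : u i * v j = 0 := by
        have := congrFun (congrFun hcon i) j; simpa using this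
      exact (mul_ne_zero hi hj) this
    · rw [key u v, hud, hvd]
  · rintro w ⟨c, hc, hc0, rfl⟩
    obtain ⟨hrow, hcol⟩ := rowcol c hc
    -- find a nonzero column
    obtain ⟨i0, hi0⟩ := Function.ne_iff.mp hc0
    obtain ⟨j0, hj0⟩ := Function.ne_iff.mp (by simpa using hi0)
    set T : Finset (Fin ℓ) := Finset.univ.filter fun i => c i ≠ 0 with hT
    have hcolmem : hammingWt (fun i => c i j0) ∈
        {w : ℕ | ∃ u ∈ C₁, u ≠ 0 ∧ hammingWt u = w} := by
      refine ⟨fun i => c i j0, hcol j0, ?_, rfl⟩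
      exact Function.ne_iff.mpr ⟨i0, by simpa using hj0⟩
    have hcard : dH ≤ T.card := by
      refine le_trans (hdHlb hcolmem) ?_
      rw [hammingWt_eq_card]
      apply Finset.card_le_card
      intro i hi
      simp only [Finset.mem_filter, Finset.mem_univ, true_and] at hi
      rw [hT, Finset.mem_filter]
      exact ⟨Finset.mem_univ i, fun h => hi (congrFun (h : c i = 0) j0)⟩
    have hsum : (T.card : ℝ) * dX ≤ ∑ i ∈ T, wtX (c i) := by
      calc (T.card : ℝ) * dX = ∑ _i ∈ T, dX := by rw [Finset.sum_const, nsmul_eq_mul]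
      _ ≤ ∑ i ∈ T, wtX (c i) := by
        refine Finset.sum_le_sum fun i hi => ?_
        have hi' : c i ≠ 0 := (Finset.mem_filter.mp hi).2
        exact hdXlb ⟨c i, hrow i, hi', rfl⟩
    calc (dH : ℝ) * dX ≤ (T.card : ℝ) * dX := by
          exact mul_le_mul_of_nonneg_right (by exact_mod_cast hcard) hdXpos.le
      _ ≤ ∑ i ∈ T, wtX (c i) := hsum
      _ ≤ ∑ i, wtX (c i) := by
          refine Finset.sum_le_sum_of_subset_of_nonneg (Finset.subset_univ T)
            fun i _ _ => hnonneg (c i)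
end

section
/- Let C_1 ⊆ F^ℓ be a cyclic code and C_2 ⊆ F^m a skew-cyclic code with respect to θ. Then for every ℓ-th root of unity a ∈ K and every β ∈ L*, the following are equivalent: (i) every codeword c = (c^(0) | … | c^(ℓ−1)) of the product code C_1 ⊗ C_2 ⊆ F^{ℓm} satisfies Σ_{h=0}^{ℓ−1} Σ_{t=0}^{m−1} c^(h)_t σ^t(β) a^h = 0 in L; (ii) either every u ∈ C_1 satisfies Σ_{h=0}^{ℓ−1} u_h a^h = 0, or every v ∈ C_2 satisfies Σ_{t=0}^{m−1} v_t σ^t(β) = 0. Equivalently, the defining set of C_1 ⊗ C_2 equals T^H_{C_1} ⊎ T^R_{C_2} = (T^H_{C_1} × L*) ∪ ({ℓ-th roots of unity in K} × T^R_{C_2}), where T^H_{C_1} is the set of ℓ-th roots of unity a ∈ K at which all codewords of C_1 vanish as polynomials, and T^R_{C_2} is the set of β ∈ L* with Σ_{t} v_t σ^t(β) = 0 for all v ∈ C_2. -/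
/-- The defining set of the product of a cyclic code and a
skew-cyclic code is `T^H_{C₁} ⊎ T^R_{C₂}`: for every `ℓ`-th root of unity
`a ∈ K` and every `β ∈ L*`, the pair `(a, β)` lies in the defining set of
`C₁ ⊗ C₂` iff `a ∈ T^H_{C₁}` or `β ∈ T^R_{C₂}`. -/
theorem definingSet_prodCode
    -- the tower of fields E ⊆ F, K ⊆ L = FK with F/E of degree m, K/E of degree h
    (E F K L : Type*) [Field E] [Field F] [Field K] [Field L]
    [Algebra E F] [Algebra E K] [Algebra E L] [Algebra F L] [Algebra K L]
    [IsScalarTower E F L] [IsScalarTower E K L]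
    (m h ℓ : ℕ) [NeZero m] [NeZero ℓ]
    (hFE : Module.finrank E F = m) (hKE : Module.finrank E K = h)
    (hcap : Set.range (algebraMap F L) ∩ Set.range (algebraMap K L)
      = Set.range (algebraMap E L))
    (hcomp : Algebra.adjoin K (Set.range (algebraMap F L)) = ⊤)
    -- L/K cyclic Galois of degree m with generator σ
    [IsGalois K L] (hLK : Module.finrank K L = m)
    (σ : L ≃ₐ[K] L) (hσgen : ∀ τ : L ≃ₐ[K] L, τ ∈ Subgroup.zpowers σ)
    -- θ = σ|_F has order m and fixed field E
    (θ : F ≃+* F) (hθσ : ∀ x : F, σ (algebraMap F L x) = algebraMap F L (θ x))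
    (hθord : orderOf θ = m)
    (hθfix : {x : F | θ x = x} = Set.range (algebraMap E F))
    -- ℓ coprime with m and with the characteristic of K
    (hlm : Nat.Coprime ℓ m) (hchar : (ℓ : K) ≠ 0)
    -- the two constituent codes: C₁ cyclic, C₂ skew-cyclic w.r.t. θ
    (C₁ : Submodule F (Fin ℓ → F)) (C₂ : Submodule F (Fin m → F))
    (hC₁cyc : ∀ u ∈ C₁, (fun i => u (i - 1)) ∈ C₁)
    (hC₂sc : ∀ v ∈ C₂, (fun j => θ (v (j - 1))) ∈ C₂)
    -- an ℓ-th root of unity a ∈ K and β ∈ L*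
    (a : K) (ha : a ^ ℓ = 1) (β : L) (hβ : β ≠ 0) :
    (∀ c ∈ prodCode F C₁ C₂,
        ∑ h' : Fin ℓ, ∑ t : Fin m,
          algebraMap F L (c h' t) * (σ ^ (t : ℕ)) β * (algebraMap K L a) ^ (h' : ℕ) = 0)
      ↔ ((∀ u ∈ C₁,
            ∑ h' : Fin ℓ, algebraMap F L (u h') * (algebraMap K L a) ^ (h' : ℕ) = 0)
        ∨ (∀ v ∈ C₂,
            ∑ t : Fin m, algebraMap F L (v t) * (σ ^ (t : ℕ)) β = 0)) := by
  classical
  set a' : L := algebraMap K L a with ha'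
  have key : ∀ u : Fin ℓ → F, ∀ v : Fin m → F,
      (∑ h' : Fin ℓ, ∑ t : Fin m,
        algebraMap F L (u h' * v t) * (σ ^ (t : ℕ)) β * a' ^ (h' : ℕ))
      = (∑ h' : Fin ℓ, algebraMap F L (u h') * a' ^ (h' : ℕ))
        * (∑ t : Fin m, algebraMap F L (v t) * (σ ^ (t : ℕ)) β) := by
    intro u v
    rw [Finset.sum_mul_sum]
    refine Finset.sum_congr rfl fun h' _ => Finset.sum_congr rfl fun t _ => ?_
    rw [map_mul]; ring
  constructor
  · intro hi
    by_contra hcon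
    push_neg at hcon
    obtain ⟨h1, h2⟩ := hcon
    obtain ⟨u, hu, hA⟩ := h1
    obtain ⟨v, hv, hB⟩ := h2
    have hmem : (fun i j => u i * v j) ∈ prodCode F C₁ C₂ :=
      Submodule.subset_span ⟨u, hu, v, hv, rfl⟩
    have h0 := hi _ hmem
    rw [key u v] at h0
    rcases mul_eq_zero.mp h0 with h0 | h0
    · exact hA h0
    · exact hB h0
  · intro hii
    let φ : (Fin ℓ → Fin m → F) →ₗ[F] L :=
      { toFun := fun c => ∑ h' : Fin ℓ, ∑ t : Fin m,
          algebraMap F L (c h' t) * (σ ^ (t : ℕ)) β * a' ^ (h' : ℕ)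
        map_add' := by
          intro x y
          simp [add_mul, Finset.sum_add_distrib]
        map_smul' := by
          intro r x
          simp only [Pi.smul_apply, smul_eq_mul, map_mul, RingHom.id_apply,
            Algebra.smul_def, Finset.mul_sum]
          exact Finset.sum_congr rfl fun h' _ => Finset.sum_congr rfl fun t _ => by ring }
    have hle : prodCode F C₁ C₂ ≤ LinearMap.ker φ := by
      rw [prodCode, Submodule.span_le]
      rintro w ⟨u, hu, v, hv, rfl⟩
      simp only [SetLike.mem_coe, LinearMap.mem_ker]
      show (∑ h' : Fin ℓ, ∑ t : Fin m,
          algebraMap F L (u h' * v t) * (σ ^ (t : ℕ)) β * a' ^ (h' : ℕ)) = 0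
      rw [key u v]
      rcases hii with hii | hii
      · rw [hii u hu, zero_mul]
      · rw [hii v hv, mul_zero]
    intro c hc
    exact LinearMap.mem_ker.mp (hle hc)
end
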